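/- arXiv:1812.03714 — 7 statements merged into one kernel-verified Lean document; each statement's English description precedes it below -/
import Mathlib

section
/- The group G(e,e,n) of n×n monomial matrices whose nonzero entries are e-th roots of unity and whose product of nonzero entries equals 1 is generated by the matrices t_i (for 0 ≤ i ≤ e−1), where t_i acts by swapping the first two coordinates with multipliers ζ_e^{-i} and ζ_e^{i}, together with the transposition matrices s_j = (j−1, j) for 3 ≤ j ≤ n. -/
noncomputable section

open Matrix

/-- The primitive `e`-th root of unity `ζ_e = exp(2πi/e)`. -/
def zeta (e : ℕ) : ℂ := Complex.exp (2 * (Real.pi : ℂ) * Complex.I / (e : ℂ))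

/-- The generator `t_i` of `G(e,e,n)`: it swaps the first two coordinates with
multipliers `ζ_e^{-i}` and `ζ_e^{i}` and is the identity elsewhere. -/
def tmat (e n i : ℕ) : Matrix (Fin n) (Fin n) ℂ :=
  Matrix.of fun p q =>
    if (p : ℕ) = 0 ∧ (q : ℕ) = 1 then (zeta e)⁻¹ ^ i
    else if (p : ℕ) = 1 ∧ (q : ℕ) = 0 then zeta e ^ i
    else if (p : ℕ) = (q : ℕ) ∧ 2 ≤ (p : ℕ) then 1 else 0

/-- The generator `s_j` of `G(e,e,n)` (`3 ≤ j ≤ n`, 1-based): the permutation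
matrix of the transposition `(j-1, j)`. -/
def smat (n j : ℕ) : Matrix (Fin n) (Fin n) ℂ :=
  Matrix.of fun p q =>
    if (p : ℕ) = j - 2 ∧ (q : ℕ) = j - 1 then 1
    else if (p : ℕ) = j - 1 ∧ (q : ℕ) = j - 2 then 1
    else if (p : ℕ) = (q : ℕ) ∧ (p : ℕ) ≠ j - 2 ∧ (p : ℕ) ≠ j - 1 then 1 else 0

/-- The Corran–Picantin generating set `X = {t_0,…,t_{e-1}, s_3,…,s_n}`. -/
def genSet (e n : ℕ) : Set (Matrix (Fin n) (Fin n) ℂ) :=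
  {M | (∃ i < e, M = tmat e n i) ∨ ∃ j, 3 ≤ j ∧ j ≤ n ∧ M = smat n j}

/-- Membership in `G(e,e,n)`: a monomial matrix whose nonzero entries are
`e`-th roots of unity with product of nonzero entries equal to `1`.
(Each row sum is the unique nonzero entry of that row.) -/
def IsGeen (e n : ℕ) (w : Matrix (Fin n) (Fin n) ℂ) : Prop :=
  (∀ i, ∃! j, w i j ≠ 0) ∧ (∀ j, ∃! i, w i j ≠ 0) ∧
  (∀ i j, w i j ≠ 0 → w i j ^ e = 1) ∧ (∏ i, ∑ j, w i j) = 1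

/-- Word length over the Corran–Picantin generating set. -/
def len (e n : ℕ) (w : Matrix (Fin n) (Fin n) ℂ) : ℕ :=
  sInf {l | ∃ L : List (Matrix (Fin n) (Fin n) ℂ),
    (∀ x ∈ L, x ∈ genSet e n) ∧ L.prod = w ∧ L.length = l}

/-- The element `λ`: diagonal with `λ[i,i] = ζ_e` for `i ≥ 2` (1-based) and
`λ[1,1] = ζ_e^{-(n-1)}`. -/
def lamMat (e n : ℕ) : Matrix (Fin n) (Fin n) ℂ :=
  Matrix.of fun p q =>
    if p = q then (if (p : ℕ) = 0 then (zeta e)⁻¹ ^ (n - 1) else zeta e) else 0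

/-- Left divisibility: `u ⪯ w` iff `w = u v` with `ℓ(u) + ℓ(v) = ℓ(w)`. -/
def LDiv (e n : ℕ) (u w : Matrix (Fin n) (Fin n) ℂ) : Prop :=
  ∃ v, IsGeen e n v ∧ u * v = w ∧ len e n u + len e n v = len e n w

/-- Right divisibility: `u ⪯_r w` iff `w = v u` with `ℓ(v) + ℓ(u) = ℓ(w)`. -/
def RDiv (e n : ℕ) (u w : Matrix (Fin n) (Fin n) ℂ) : Prop :=
  ∃ v, IsGeen e n v ∧ v * u = w ∧ len e n v + len e n u = len e n w


/-! ### Auxiliary machinery -/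

/-- Monomial matrix with permutation `σ` and row multipliers `d`. -/
def Mmat (n : ℕ) (σ : Equiv.Perm (Fin n)) (d : Fin n → ℂ) : Matrix (Fin n) (Fin n) ℂ :=
  Matrix.of fun i j => if σ i = j then d i else 0

lemma Mmat_mul {n : ℕ} (σ τ : Equiv.Perm (Fin n)) (d f : Fin n → ℂ) :
    Mmat n σ d * Mmat n τ f = Mmat n (σ.trans τ) (fun i => d i * f (σ i)) := by
  ext i k
  simp only [Mmat, Matrix.mul_apply, Matrix.of_apply, Equiv.trans_apply]
  rw [Finset.sum_eq_single (σ i)]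
  · simp
    congr
  · intro b _ hb
    rw [if_neg (Ne.symm hb), zero_mul]
  · simp

lemma Mmat_one {n : ℕ} : Mmat n 1 (fun _ => 1) = 1 := by
  ext i j
  simp [Mmat, Matrix.one_apply]
  congr

lemma Mmat_rowsum {n : ℕ} (σ : Equiv.Perm (Fin n)) (d : Fin n → ℂ) (i : Fin n) :
    ∑ j, Mmat n σ d i j = d i := by
  simp [Mmat]

lemma Mmat_congr {n : ℕ} (σ : Equiv.Perm (Fin n)) {d d' : Fin n → ℂ}
    (h : ∀ x, d x = d' x) : Mmat n σ d = Mmat n σ d' := by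
  ext p q
  simp only [Mmat, Matrix.of_apply]
  rw [h p]

lemma zeta_prim {e : ℕ} (he : 1 ≤ e) : IsPrimitiveRoot (zeta e) e := by
  unfold zeta
  exact Complex.isPrimitiveRoot_exp e (by omega)

lemma zeta_pow_e {e : ℕ} (he : 1 ≤ e) : zeta e ^ e = 1 := (zeta_prim he).pow_eq_one

lemma zeta_ne_zero (e : ℕ) : zeta e ≠ 0 := Complex.exp_ne_zero _

lemma pow_mod_eq {a : ℂ} {e : ℕ} (h : a ^ e = 1) (m : ℕ) : a ^ (m % e) = a ^ m := by
  conv_rhs => rw [← Nat.mod_add_div m e]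
  rw [pow_add, pow_mul, h, one_pow, mul_one]

lemma prod_pair_fun {n : ℕ} {a b : Fin n} (hab : a ≠ b) (u v : ℂ) :
    (∏ x, (if x = a then u else if x = b then v else 1)) = u * v := by
  rw [← Finset.prod_subset (Finset.subset_univ ({a, b} : Finset (Fin n)))
    (fun x _ hx => by
      simp only [Finset.mem_insert, Finset.mem_singleton, not_or] at hx
      rw [if_neg hx.1, if_neg hx.2])]
  rw [Finset.prod_pair hab, if_pos rfl, if_neg (Ne.symm hab), if_pos rfl]

lemma isGeen_Mmat {e n : ℕ} (he : 1 ≤ e) (σ : Equiv.Perm (Fin n)) (d : Fin n → ℂ)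
    (hd : ∀ i, d i ^ e = 1) (hprod : ∏ i, d i = 1) : IsGeen e n (Mmat n σ d) := by
  have hd0 : ∀ i, d i ≠ 0 := by
    intro i h
    have := hd i
    rw [h, zero_pow (by omega)] at this
    exact one_ne_zero this.symm
  refine ⟨fun i => ⟨σ i, ?_, ?_⟩, fun j => ⟨σ.symm j, ?_, ?_⟩, ?_, ?_⟩
  · simp [Mmat, hd0 i]
  · intro y hy
    by_contra hne
    apply hy
    simp only [Mmat, Matrix.of_apply]
    rw [if_neg (fun h => hne h.symm)]
  · simp [Mmat, hd0]
  · intro y hy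
    by_contra hne
    apply hy
    simp only [Mmat, Matrix.of_apply, ne_eq]
    rw [if_neg]
    intro h
    exact hne (by rw [← h, Equiv.symm_apply_apply])
  · intro i j h
    simp only [Mmat, Matrix.of_apply] at h ⊢
    by_cases hij : σ i = j
    · rw [if_pos hij]; exact hd i
    · simp [hij] at h
  · simp only [Mmat_rowsum]; exact hprod

lemma exists_of_isGeen {e n : ℕ} {w : Matrix (Fin n) (Fin n) ℂ} (hw : IsGeen e n w) :
    ∃ σ : Equiv.Perm (Fin n), ∃ d : Fin n → ℂ,
      (∀ i, d i ≠ 0 ∧ d i ^ e = 1) ∧ (∏ i, d i = 1) ∧ w = Mmat n σ d := by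
  obtain ⟨h1, h2, h3, h4⟩ := hw
  have hg : ∀ i, w i ((h1 i).choose) ≠ 0 := fun i => (h1 i).choose_spec.1
  have hinj : Function.Injective (fun i => (h1 i).choose) := by
    intro a b hab
    simp only at hab
    obtain ⟨-, huniq⟩ := (h2 ((h1 a).choose)).choose_spec
    rw [huniq a (hg a), huniq b (by rw [hab]; exact hg b)]
  let σ : Equiv.Perm (Fin n) := Equiv.ofBijective _ (Finite.injective_iff_bijective.mp hinj)
  have hwz : ∀ i j, σ i ≠ j → w i j = 0 := by
    intro i j hne
    by_contra h
    exact hne ((h1 i).choose_spec.2 j h ▸ rfl)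
  have hweq : w = Mmat n σ (fun i => w i (σ i)) := by
    ext i j
    simp only [Mmat, Matrix.of_apply]
    by_cases h : σ i = j
    · rw [if_pos h, h]
    · rw [if_neg h, hwz i j h]
  refine ⟨σ, fun i => w i (σ i), fun i => ⟨hg i, h3 i (σ i) (hg i)⟩, ?_, hweq⟩
  rw [← h4]
  refine Finset.prod_congr rfl fun i _ => ?_
  rw [Finset.sum_eq_single (σ i)]
  · intro b _ hb
    exact hwz i b (Ne.symm hb)
  · simp

lemma tmat_eq {e n : ℕ} (i : ℕ) (a b : Fin n) (ha : (a : ℕ) = 0) (hb : (b : ℕ) = 1) :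
    tmat e n i = Mmat n (Equiv.swap a b)
      (fun x => if x = a then (zeta e)⁻¹ ^ i else if x = b then zeta e ^ i else 1) := by
  ext p q
  simp only [tmat, Mmat, Matrix.of_apply, Equiv.swap_apply_def, Fin.ext_iff, ha, hb]
  split_ifs <;> simp_all <;> omega

lemma smat_eq {n j : ℕ} (a b : Fin n) (h3 : 3 ≤ j) (ha : (a : ℕ) = j - 2)
    (hb : (b : ℕ) = j - 1) :
    smat n j = Mmat n (Equiv.swap a b) (fun _ => 1) := by
  ext p q
  simp only [smat, Mmat, Matrix.of_apply, Equiv.swap_apply_def, Fin.ext_iff, ha, hb]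
  split_ifs <;> simp_all

lemma swap_mem {e n : ℕ} (he : 1 ≤ e) (a b : Fin n)
    (hab : (a : ℕ) + 1 = b) :
    Mmat n (Equiv.swap a b) (fun _ => 1) ∈ Submonoid.closure (genSet e n) := by
  apply Submonoid.subset_closure
  by_cases h0 : (a : ℕ) = 0
  · left
    refine ⟨0, he, ?_⟩
    rw [tmat_eq 0 a b h0 (by omega)]
    ext p q
    simp [Mmat]
  · right
    have hbn : (b : ℕ) < n := b.isLt
    exact ⟨(a : ℕ) + 2, by omega, by omega,
      (smat_eq (j := (a : ℕ) + 2) a b (by omega) (by omega) (by omega)).symm⟩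

lemma perm_mem {e n : ℕ} (he : 1 ≤ e) (hn : 2 ≤ n) (σ : Equiv.Perm (Fin n)) :
    Mmat n σ (fun _ => 1) ∈ Submonoid.closure (genSet e n) := by
  obtain ⟨m, rfl⟩ : ∃ m, n = m + 1 := ⟨n - 1, by omega⟩
  suffices h : ∀ σ' ∈ Submonoid.closure
      (Set.range fun i : Fin m ↦ Equiv.swap i.castSucc i.succ),
      Mmat (m+1) σ' (fun _ => 1) ∈ Submonoid.closure (genSet e (m+1)) by
    exact h σ (by rw [Equiv.Perm.mclosure_swap_castSucc_succ]; trivial)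
  intro σ' hσ'
  induction hσ' using Submonoid.closure_induction with
  | one => rw [Mmat_one]; exact one_mem _
  | mul a b _ _ iha ihb =>
      have hab : Mmat (m+1) b (fun _ => 1) * Mmat (m+1) a (fun _ => 1)
          = Mmat (m+1) (a*b) (fun _ => 1) := by
        rw [Mmat_mul]
        ext i k
        simp [Mmat]
        congr
      rw [← hab]
      exact mul_mem ihb iha
  | mem x hx =>
      obtain ⟨i, rfl⟩ := hx
      exact swap_mem he _ _ (by simp)

lemma pair01_mem {e n : ℕ} (he : 1 ≤ e) (a b : Fin n) (ha : (a : ℕ) = 0)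
    (hb : (b : ℕ) = 1) (m : ℕ) :
    Mmat n 1 (fun x => if x = a then zeta e ^ m else if x = b then (zeta e)⁻¹ ^ m else 1)
      ∈ Submonoid.closure (genSet e n) := by
  have hab : a ≠ b := fun h => by rw [h, hb] at ha; omega
  have key : tmat e n 0 * tmat e n (m % e) =
      Mmat n 1 (fun x => if x = a then zeta e ^ m else if x = b then (zeta e)⁻¹ ^ m else 1) := by
    rw [tmat_eq 0 a b ha hb, tmat_eq (m % e) a b ha hb, Mmat_mul, Equiv.swap_swap]
    have hperm : (Equiv.refl (Fin n)) = (1 : Equiv.Perm (Fin n)) := rfl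
    rw [hperm]
    apply Mmat_congr
    intro x
    by_cases hxa : x = a
    · subst hxa
      rw [if_pos rfl, if_pos rfl, Equiv.swap_apply_left, if_neg (Ne.symm hab), if_pos rfl]
      rw [pow_zero, one_mul, pow_mod_eq (zeta_pow_e he)]
    · by_cases hxb : x = b
      · subst hxb
        rw [if_neg hxa, if_neg (Ne.symm hab), if_pos rfl, if_pos rfl,
          Equiv.swap_apply_right, if_pos rfl]
        rw [pow_zero, one_mul, pow_mod_eq (by rw [inv_pow, zeta_pow_e he, inv_one])]
      · rw [if_neg hxa, if_neg hxb, if_neg hxa, if_neg hxb,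
          Equiv.swap_apply_of_ne_of_ne hxa hxb, if_neg hxa, if_neg hxb, one_mul]
  rw [← key]
  exact mul_mem (Submonoid.subset_closure (Or.inl ⟨0, he, rfl⟩))
    (Submonoid.subset_closure (Or.inl ⟨m % e, Nat.mod_lt _ (by omega), rfl⟩))

lemma Mmat_conj {n : ℕ} (σ : Equiv.Perm (Fin n)) (d : Fin n → ℂ) :
    Mmat n σ (fun _ => 1) * Mmat n 1 d * Mmat n σ.symm (fun _ => 1)
      = Mmat n 1 (fun x => d (σ x)) := by
  rw [Mmat_mul, Mmat_mul]
  ext p q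
  simp [Mmat]
  congr

lemma pair_mem {e n : ℕ} (he : 1 ≤ e) (hn : 2 ≤ n) (a b : Fin n) (hab : a ≠ b) (m : ℕ) :
    Mmat n 1 (fun x => if x = a then zeta e ^ m else if x = b then (zeta e)⁻¹ ^ m else 1)
      ∈ Submonoid.closure (genSet e n) := by
  set i0 : Fin n := ⟨0, by omega⟩ with hi0
  set i1 : Fin n := ⟨1, by omega⟩ with hi1
  have h01 : i0 ≠ i1 := fun h => by simp [hi0, hi1, Fin.ext_iff] at h
  set b' := Equiv.swap i0 a b with hb'
  have hb'0 : b' ≠ i0 := by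
    intro h
    apply hab
    have := (Equiv.swap i0 a).injective (h.trans (Equiv.swap_apply_right i0 a).symm)
    exact this.symm ▸ rfl
  set σ := (Equiv.swap i0 a).trans (Equiv.swap i1 b') with hσ
  have hσa : σ a = i0 := by
    simp only [hσ, Equiv.trans_apply, Equiv.swap_apply_right]
    exact Equiv.swap_apply_of_ne_of_ne h01 (Ne.symm hb'0)
  have hσb : σ b = i1 := by
    simp only [hσ, Equiv.trans_apply, ← hb', Equiv.swap_apply_right]
  have h := mul_mem (mul_mem (perm_mem he hn σ) (pair01_mem he i0 i1 rfl rfl m))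
    (perm_mem he hn σ.symm)
  rw [Mmat_conj] at h
  convert h using 2
  funext x
  have hiff0 : σ x = i0 ↔ x = a := by
    rw [← hσa]
    exact σ.apply_eq_iff_eq
  have hiff1 : σ x = i1 ↔ x = b := by
    rw [← hσb]
    exact σ.apply_eq_iff_eq
  by_cases hxa : x = a
  · rw [if_pos hxa, if_pos (hiff0.mpr hxa)]
  · by_cases hxb : x = b
    · rw [if_neg hxa, if_pos hxb, if_neg (fun h => hxa (hiff0.mp h)),
        if_pos (hiff1.mpr hxb)]
    · rw [if_neg hxa, if_neg hxb, if_neg (fun h => hxa (hiff0.mp h)),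
        if_neg (fun h => hxb (hiff1.mp h))]

lemma diag_triv_mem {e n : ℕ} (he : 1 ≤ e) (f : Fin n → ℕ) (hf : ∀ i, e ∣ f i) :
    Mmat n 1 (fun i => zeta e ^ f i) ∈ Submonoid.closure (genSet e n) := by
  have : (fun i => zeta e ^ f i) = fun _ => (1 : ℂ) := by
    funext i
    obtain ⟨c, hc⟩ := hf i
    rw [hc, pow_mul, zeta_pow_e he, one_pow]
  rw [this, Mmat_one]
  exact one_mem _

lemma diag_mem {e n : ℕ} (he : 1 ≤ e) (hn : 2 ≤ n) :
    ∀ N (f : Fin n → ℕ),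
      (Finset.univ.filter fun i => i ≠ (⟨0, by omega⟩ : Fin n) ∧ ¬ (e ∣ f i)).card ≤ N →
      e ∣ ∑ i, f i → Mmat n 1 (fun i => zeta e ^ f i) ∈ Submonoid.closure (genSet e n) := by
  have hz0 := zeta_ne_zero e
  set i0 : Fin n := ⟨0, by omega⟩ with hi0
  intro N
  induction N with
  | zero =>
    intro f hcard hsum
    apply diag_triv_mem he
    have hall : ∀ i, i ≠ i0 → e ∣ f i := by
      intro i hi
      by_contra h
      have hmem : i ∈ Finset.univ.filter fun i => i ≠ i0 ∧ ¬ (e ∣ f i) :=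
        Finset.mem_filter.mpr ⟨Finset.mem_univ i, hi, h⟩
      have := Finset.card_pos.mpr ⟨i, hmem⟩
      omega
    have hi0dvd : e ∣ f i0 := by
      have hrest : e ∣ ∑ x ∈ Finset.univ.erase i0, f x :=
        Finset.dvd_sum fun j hj => hall j (Finset.mem_erase.mp hj).1
      have hdecomp : f i0 + ∑ x ∈ Finset.univ.erase i0, f x = ∑ x, f x :=
        Finset.add_sum_erase _ f (Finset.mem_univ i0)
      have hfi : f i0 = (∑ x, f x) - ∑ x ∈ Finset.univ.erase i0, f x := by omega
      rw [hfi]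
      exact Nat.dvd_sub hsum hrest
    intro i
    by_cases hi : i = i0
    · rw [hi]; exact hi0dvd
    · exact hall i hi
  | succ N ih =>
    intro f hcard hsum
    rcases Finset.eq_empty_or_nonempty
      (Finset.univ.filter fun i => i ≠ i0 ∧ ¬ (e ∣ f i)) with hemp | ⟨b, hbmem⟩
    · exact ih f (by rw [hemp]; simp) hsum
    · obtain ⟨-, hbne, hbnd⟩ := Finset.mem_filter.mp hbmem
      set f' := Function.update (Function.update f b 0) i0 (f i0 + f b) with hf'
      have hfb' : f' b = 0 := by
        rw [hf', Function.update_of_ne hbne, Function.update_self]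
      have hfi0 : f' i0 = f i0 + f b := Function.update_self _ _ _
      have hfother : ∀ x, x ≠ b → x ≠ i0 → f' x = f x := by
        intro x hxb hxi
        rw [hf', Function.update_of_ne hxi, Function.update_of_ne hxb]
      have hsum' : e ∣ ∑ i, f' i := by
        have hbA : b ∈ Finset.univ \ ({i0} : Finset (Fin n)) :=
          Finset.mem_sdiff.mpr ⟨Finset.mem_univ b, by simp [hbne]⟩
        have h1 : ∑ x, f' x = (f i0 + f b) + ∑ x ∈ Finset.univ \ ({i0} : Finset (Fin n)),
            Function.update f b 0 x := Finset.sum_update_of_mem (Finset.mem_univ i0) _ _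
        have h2 : ∑ x ∈ Finset.univ \ ({i0} : Finset (Fin n)), Function.update f b 0 x
            = 0 + ∑ x ∈ (Finset.univ \ ({i0} : Finset (Fin n))) \ {b}, f x :=
          Finset.sum_update_of_mem hbA _ _
        have h3 : f i0 + ∑ x ∈ Finset.univ \ ({i0} : Finset (Fin n)), f x = ∑ x, f x := by
          rw [← Finset.erase_eq]
          exact Finset.add_sum_erase _ f (Finset.mem_univ i0)
        have h4 : f b + ∑ x ∈ (Finset.univ \ ({i0} : Finset (Fin n))) \ {b}, f x
            = ∑ x ∈ Finset.univ \ ({i0} : Finset (Fin n)), f x := by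
          rw [← Finset.erase_eq]
          exact Finset.add_sum_erase _ f hbA
        have : ∑ x, f' x = ∑ x, f x := by omega
        rw [this]
        exact hsum
      have hcard' : (Finset.univ.filter fun i => i ≠ i0 ∧ ¬ (e ∣ f' i)).card ≤ N := by
        have hsub : (Finset.univ.filter fun i => i ≠ i0 ∧ ¬ (e ∣ f' i)) ⊆
            (Finset.univ.filter fun i => i ≠ i0 ∧ ¬ (e ∣ f i)).erase b := by
          intro x hx
          obtain ⟨-, hxi, hxd⟩ := Finset.mem_filter.mp hx
          have hxb : x ≠ b := by
            intro h
            subst h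
            rw [hfb'] at hxd
            exact hxd (dvd_zero e)
          refine Finset.mem_erase.mpr ⟨hxb, Finset.mem_filter.mpr ⟨Finset.mem_univ x, hxi, ?_⟩⟩
          rwa [hfother x hxb hxi] at hxd
        have := Finset.card_le_card hsub
        have := Finset.card_erase_of_mem hbmem
        omega
      have hdecomp : Mmat n 1 (fun i => zeta e ^ f i) =
          Mmat n 1 (fun x => if x = b then zeta e ^ (f b)
            else if x = i0 then (zeta e)⁻¹ ^ (f b) else 1)
            * Mmat n 1 (fun i => zeta e ^ f' i) := by
        rw [Mmat_mul]
        have hperm : ((1 : Equiv.Perm (Fin n)).trans (1 : Equiv.Perm (Fin n))) = (1 : Equiv.Perm (Fin n)) := rfl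
        rw [hperm]
        apply Mmat_congr
        intro x
        simp only [Equiv.Perm.one_apply]
        by_cases hxb : x = b
        · subst hxb
          rw [if_pos rfl, hfb', pow_zero, mul_one]
        · by_cases hxi : x = i0
          · subst hxi
            rw [if_neg hxb, if_pos rfl, hfi0, inv_pow, pow_add,
              mul_comm (zeta e ^ f i0), inv_mul_cancel_left₀ (pow_ne_zero (f b) hz0)]
          · rw [if_neg hxb, if_neg hxi, one_mul, hfother x hxb hxi]
      rw [hdecomp]
      exact mul_mem (pair_mem he hn b i0 hbne (f b)) (ih f' hcard' hsum')

/-- `G(e,e,n)` is generated by the matrices `t_0,…,t_{e-1}`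
and `s_3,…,s_n` (all generators are involutions, so the generated submonoid is
the generated group). -/
theorem statement0 (e n : ℕ) (he : 1 ≤ e) (hn : 2 ≤ n) :
    (Submonoid.closure (genSet e n) : Set (Matrix (Fin n) (Fin n) ℂ)) =
      {w | IsGeen e n w} := by
  apply Set.Subset.antisymm
  · intro w hw
    rw [SetLike.mem_coe] at hw
    induction hw using Submonoid.closure_induction with
    | one =>
      show IsGeen e n 1
      rw [← Mmat_one]
      exact isGeen_Mmat he 1 _ (fun _ => one_pow e) (by simp)
    | mul a b _ _ iha ihb =>
      obtain ⟨σ, d, hd, hdp, rfl⟩ := exists_of_isGeen iha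
      obtain ⟨τ, f, hf, hfp, rfl⟩ := exists_of_isGeen ihb
      rw [Mmat_mul]
      apply isGeen_Mmat he
      · intro i
        rw [mul_pow, (hd i).2, (hf (σ i)).2, one_mul]
      · rw [Finset.prod_mul_distrib, hdp, Equiv.prod_comp σ f, hfp, one_mul]
    | mem x hx =>
      rcases hx with ⟨i, hi, rfl⟩ | ⟨j, hj3, hjn, rfl⟩
      · show IsGeen e n (tmat e n i)
        have h01 : (⟨0, by omega⟩ : Fin n) ≠ ⟨1, by omega⟩ := fun h => by
          simp [Fin.ext_iff] at h
        rw [tmat_eq i (⟨0, by omega⟩ : Fin n) ⟨1, by omega⟩ rfl rfl]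
        apply isGeen_Mmat he
        · intro x
          by_cases hx0 : x = (⟨0, by omega⟩ : Fin n)
          · rw [if_pos hx0, ← pow_mul, mul_comm i e, pow_mul, inv_pow, zeta_pow_e he,
              inv_one, one_pow]
          · by_cases hx1 : x = (⟨1, by omega⟩ : Fin n)
            · rw [if_neg hx0, if_pos hx1, ← pow_mul, mul_comm i e, pow_mul, zeta_pow_e he,
                one_pow]
            · rw [if_neg hx0, if_neg hx1, one_pow]
        · rw [prod_pair_fun h01, inv_pow, inv_mul_cancel₀ (pow_ne_zero i (zeta_ne_zero e))]
      · show IsGeen e n (smat n j)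
        rw [smat_eq (⟨j - 2, by omega⟩ : Fin n) ⟨j - 1, by omega⟩ hj3 rfl rfl]
        exact isGeen_Mmat he _ _ (fun _ => one_pow e) (by simp)
  · intro w hw
    obtain ⟨σ, d, hd, hdp, rfl⟩ := exists_of_isGeen hw
    haveI : NeZero e := ⟨by omega⟩
    choose k hk hkval using fun i => (zeta_prim he).eq_pow_of_pow_eq_one (hd i).2
    have hsum : e ∣ ∑ i, k i := by
      rw [← (zeta_prim he).pow_eq_one_iff_dvd, ← Finset.prod_pow_eq_pow_sum]
      rw [← hdp]
      exact Finset.prod_congr rfl fun i _ => hkval i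
    have hdec : Mmat n σ d = Mmat n 1 (fun i => zeta e ^ k i) * Mmat n σ (fun _ => 1) := by
      rw [Mmat_mul]
      have hperm : ((1 : Equiv.Perm (Fin n)).trans σ) = σ := rfl
      rw [hperm]
      apply Mmat_congr
      intro i
      rw [mul_one, hkval i]
    rw [SetLike.mem_coe, hdec]
    exact mul_mem (diag_mem he hn _ _ le_rfl hsum) (perm_mem he hn σ)
end
end

section
/- Let w ∈ G(e,e,n), with a_i = w[i,c_i] the unique nonzero entry of row i. If c_1 < c_2, then for every k with 0 ≤ k ≤ e−1, ℓ(t_k w) = ℓ(w) − 1 if and only if a_2 ≠ 1. If c_1 > c_2, then for every k, ℓ(t_k w) = ℓ(w) − 1 if and only if a_1 = ζ_e^{−k}. -/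
noncomputable section

open Matrix

namespace CP

variable {e n : ℕ}

lemma zeta_ne_zero (e : ℕ) : zeta e ≠ 0 := Complex.exp_ne_zero _

lemma zeta_pow_self (he : 1 ≤ e) : zeta e ^ e = 1 := by
  have h0 : (e : ℂ) ≠ 0 := Nat.cast_ne_zero.mpr (by omega)
  rw [zeta, ← Complex.exp_nat_mul, mul_comm, div_mul_cancel₀ _ h0,
    Complex.exp_two_pi_mul_I]

lemma zeta_pow_pow (he : 1 ≤ e) (k : ℕ) : (zeta e ^ k) ^ e = 1 := by
  rw [← pow_mul, mul_comm, pow_mul, zeta_pow_self he, one_pow]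

lemma zeta_inv_pow_pow (he : 1 ≤ e) (k : ℕ) : ((zeta e)⁻¹ ^ k) ^ e = 1 := by
  rw [inv_pow, inv_pow, zeta_pow_pow he, inv_one]

lemma exists_pow_mul_eq_one (he : 1 ≤ e) {z : ℂ} (hz : z ^ e = 1) :
    ∃ k, k < e ∧ zeta e ^ k * z = 1 := by
  have : NeZero e := ⟨by omega⟩
  obtain ⟨i, hi, hzi⟩ :=
    (Complex.isPrimitiveRoot_exp e (by omega)).eq_pow_of_pow_eq_one (ξ := z) hz
  rcases Nat.eq_zero_or_pos i with h0 | h0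
  · refine ⟨0, by omega, ?_⟩
    rw [pow_zero, one_mul, ← hzi, h0, pow_zero]
  · refine ⟨e - i, by omega, ?_⟩
    rw [← hzi]
    show zeta e ^ (e - i) * zeta e ^ i = 1
    rw [← pow_add]
    have h1 : e - i + i = e := by omega
    rw [h1, zeta_pow_self he]

/-- The unique nonzero column of a row (for monomial matrices). -/
noncomputable def col (w : Matrix (Fin n) (Fin n) ℂ) (p : Fin n) : Fin n :=
  if h : ∃ j, w p j ≠ 0 then h.choose else p

lemma col_spec {w : Matrix (Fin n) (Fin n) ℂ} {p : Fin n} (h : ∃! j, w p j ≠ 0) :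
    w p (col w p) ≠ 0 := by
  have hex : ∃ j, w p j ≠ 0 := h.exists
  rw [col, dif_pos hex]
  exact hex.choose_spec

lemma eq_col {w : Matrix (Fin n) (Fin n) ℂ} {p j : Fin n} (h : ∃! j, w p j ≠ 0)
    (hj : w p j ≠ 0) : j = col w p :=
  h.unique hj (col_spec h)

lemma apply_eq_zero {w : Matrix (Fin n) (Fin n) ℂ} {p j : Fin n} (h : ∃! j, w p j ≠ 0)
    (hj : j ≠ col w p) : w p j = 0 := by
  by_contra hne
  exact hj (eq_col h hne)

lemma row_sum {w : Matrix (Fin n) (Fin n) ℂ} {p : Fin n} (h : ∃! j, w p j ≠ 0) :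
    ∑ q, w p q = w p (col w p) :=
  Finset.sum_eq_single _ (fun b _ hb => apply_eq_zero h hb) (by simp)

lemma col_injective {w : Matrix (Fin n) (Fin n) ℂ} (hw : IsGeen e n w) :
    Function.Injective (col w) := fun a b hab =>
  (hw.2.1 (col w a)).unique (col_spec (hw.1 a)) (by rw [hab]; exact col_spec (hw.1 b))

/-- The set of ordered pairs `p < q`. -/
def Pairs (n : ℕ) : Finset (Fin n × Fin n) := Finset.univ.filter fun pq => pq.1 < pq.2

open scoped Classical in
/-- Cost of a pair of rows. -/
noncomputable def cost (w : Matrix (Fin n) (Fin n) ℂ) (p q : Fin n) : ℕ :=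
  if col w q < col w p then 1 else if w q (col w q) = 1 then 0 else 2

lemma cost_of_lt {w : Matrix (Fin n) (Fin n) ℂ} {p q : Fin n}
    (h : col w q < col w p) : cost w p q = 1 := by
  rw [cost, if_pos h]

lemma cost_of_one {w : Matrix (Fin n) (Fin n) ℂ} {p q : Fin n}
    (h1 : ¬ col w q < col w p) (h2 : w q (col w q) = 1) : cost w p q = 0 := by
  rw [cost, if_neg h1, if_pos h2]

lemma cost_of_ne_one {w : Matrix (Fin n) (Fin n) ℂ} {p q : Fin n}
    (h1 : ¬ col w q < col w p) (h2 : w q (col w q) ≠ 1) : cost w p q = 2 := by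
  rw [cost, if_neg h1, if_neg h2]

lemma cost_eq_zero_iff {w : Matrix (Fin n) (Fin n) ℂ} {p q : Fin n} :
    cost w p q = 0 ↔ ¬ col w q < col w p ∧ w q (col w q) = 1 := by
  rw [cost]
  split_ifs with h1 h2
  · simp [h1]
  · simp [h1, h2]
  · simp [h1, h2]

/-- The length formula. -/
noncomputable def F (w : Matrix (Fin n) (Fin n) ℂ) : ℕ :=
  ∑ pq ∈ Pairs n, cost w pq.1 pq.2

section rel

variable {w w' : Matrix (Fin n) (Fin n) ℂ} {x y : Fin n} {sc : Fin n → ℂ}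

lemma ne_zero_iff_of_rel (hrel : ∀ p q, w' p q = sc p * w (Equiv.swap x y p) q)
    (hsc0 : ∀ p, sc p ≠ 0) (p q : Fin n) :
    w' p q ≠ 0 ↔ w (Equiv.swap x y p) q ≠ 0 := by
  rw [hrel]
  simp [hsc0 p]

lemma isGeen_of_rel (hw : IsGeen e n w)
    (hsc0 : ∀ p, sc p ≠ 0) (hsce : ∀ p, sc p ^ e = 1) (hscprod : ∏ p, sc p = 1)
    (hrel : ∀ p q, w' p q = sc p * w (Equiv.swap x y p) q) : IsGeen e n w' := by
  refine ⟨fun p => ?_, fun q => ?_, fun p q hpq => ?_, ?_⟩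
  · obtain ⟨j, hj, hu⟩ := hw.1 (Equiv.swap x y p)
    exact ⟨j, (ne_zero_iff_of_rel hrel hsc0 p j).2 hj,
      fun j' hj' => hu j' ((ne_zero_iff_of_rel hrel hsc0 p j').1 hj')⟩
  · obtain ⟨i, hi, hu⟩ := hw.2.1 q
    refine ⟨Equiv.swap x y i, ?_, fun i' hi' => ?_⟩
    · show w' (Equiv.swap x y i) q ≠ 0
      rw [ne_zero_iff_of_rel hrel hsc0, Equiv.swap_apply_self]
      exact hi
    · have h := hu _ ((ne_zero_iff_of_rel hrel hsc0 i' q).1 hi')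
      rw [← h, Equiv.swap_apply_self]
  · rw [hrel] at hpq ⊢
    have hwne : w (Equiv.swap x y p) q ≠ 0 := by
      intro h; apply hpq; rw [h, mul_zero]
    rw [mul_pow, hsce, hw.2.2.1 _ _ hwne, one_mul]
  · have hsum : ∀ p, ∑ q, w' p q = sc p * ∑ q, w (Equiv.swap x y p) q := by
      intro p
      rw [Finset.mul_sum]
      exact Finset.sum_congr rfl fun q _ => hrel p q
    calc ∏ p, ∑ q, w' p q
        = ∏ p, (sc p * ∑ q, w (Equiv.swap x y p) q) :=
          Finset.prod_congr rfl fun p _ => hsum p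
      _ = (∏ p, sc p) * ∏ p, ∑ q, w (Equiv.swap x y p) q := Finset.prod_mul_distrib
      _ = ∏ p, ∑ q, w (Equiv.swap x y p) q := by rw [hscprod, one_mul]
      _ = ∏ p, ∑ q, w p q := Equiv.prod_comp (Equiv.swap x y) fun p => ∑ q : Fin n, w p q
      _ = 1 := hw.2.2.2

lemma col_of_rel (hw : IsGeen e n w) (hsc0 : ∀ p, sc p ≠ 0)
    (hrel : ∀ p q, w' p q = sc p * w (Equiv.swap x y p) q) (p : Fin n) :
    col w' p = col w (Equiv.swap x y p) := by
  obtain ⟨j, hj, hu⟩ := hw.1 (Equiv.swap x y p)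
  have hu' : ∃! j, w' p j ≠ 0 :=
    ⟨j, (ne_zero_iff_of_rel hrel hsc0 p j).2 hj,
      fun j' hj' => hu j' ((ne_zero_iff_of_rel hrel hsc0 p j').1 hj')⟩
  have h1 : w (Equiv.swap x y p) (col w' p) ≠ 0 :=
    (ne_zero_iff_of_rel hrel hsc0 p _).1 (col_spec hu')
  exact eq_col (hw.1 _) h1

lemma pivot_of_rel (hw : IsGeen e n w) (hsc0 : ∀ p, sc p ≠ 0)
    (hrel : ∀ p q, w' p q = sc p * w (Equiv.swap x y p) q) (q : Fin n) :
    w' q (col w' q) = sc q * w (Equiv.swap x y q) (col w (Equiv.swap x y q)) := by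
  rw [col_of_rel hw hsc0 hrel, hrel]

lemma cost_of_rel (hw : IsGeen e n w) (hsc0 : ∀ p, sc p ≠ 0)
    (hrel : ∀ p q, w' p q = sc p * w (Equiv.swap x y p) q) {p q : Fin n}
    (hq1 : sc q = 1) :
    cost w' p q = cost w (Equiv.swap x y p) (Equiv.swap x y q) := by
  have h1 := col_of_rel hw hsc0 hrel p
  have h2 := col_of_rel hw hsc0 hrel q
  have h3 : w' q (col w' q) = w (Equiv.swap x y q) (col w (Equiv.swap x y q)) := by
    rw [pivot_of_rel hw hsc0 hrel, hq1, one_mul]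
  rw [cost, cost, h3, h1, h2]

lemma swap_val (x y a : Fin n) :
    ((Equiv.swap x y a : Fin n) : ℕ) =
      if (a : ℕ) = (x : ℕ) then (y : ℕ) else if (a : ℕ) = (y : ℕ) then (x : ℕ) else (a : ℕ) := by
  rcases eq_or_ne a x with rfl | hax
  · rw [Equiv.swap_apply_left, if_pos rfl]
  · have hax' : (a : ℕ) ≠ (x : ℕ) := fun h => hax (Fin.ext h)
    rcases eq_or_ne a y with rfl | hay
    · rw [Equiv.swap_apply_right, if_neg hax', if_pos rfl]
    · have hay' : (a : ℕ) ≠ (y : ℕ) := fun h => hay (Fin.ext h)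
      rw [Equiv.swap_apply_of_ne_of_ne hax hay, if_neg hax', if_neg hay']

lemma swap_pair_mem (hadj : (y : ℕ) = (x : ℕ) + 1) {pq : Fin n × Fin n}
    (h : pq ∈ (Pairs n).erase (x, y)) :
    (Equiv.swap x y pq.1, Equiv.swap x y pq.2) ∈ (Pairs n).erase (x, y) := by
  obtain ⟨p, q⟩ := pq
  rw [Finset.mem_erase, Pairs, Finset.mem_filter] at h ⊢
  obtain ⟨hne, _, hlt⟩ := h
  dsimp only at hne hlt ⊢
  have hnev : ¬((p : ℕ) = (x : ℕ) ∧ (q : ℕ) = (y : ℕ)) := by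
    rintro ⟨h1, h2⟩
    exact hne (Prod.ext (Fin.ext h1) (Fin.ext h2))
  rw [Fin.lt_def] at hlt
  have hvp := swap_val x y p
  have hvq := swap_val x y q
  refine ⟨?_, Finset.mem_univ _, ?_⟩
  · intro hE
    rw [Prod.mk.injEq] at hE
    have h1 : ((Equiv.swap x y p : Fin n) : ℕ) = (x : ℕ) := congrArg Fin.val hE.1
    have h2 : ((Equiv.swap x y q : Fin n) : ℕ) = (y : ℕ) := congrArg Fin.val hE.2
    split_ifs at hvp hvq <;> omega
  · show (Equiv.swap x y p) < (Equiv.swap x y q)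
    rw [Fin.lt_def]
    split_ifs at hvp hvq <;> omega

lemma sc_eq_one_of_mem {sc : Fin n → ℂ} {x y : Fin n} (hadj : (y : ℕ) = (x : ℕ) + 1)
    (hsc1 : ∀ p, p ≠ x → p ≠ y → sc p = 1)
    (hsc1' : (sc x = 1 ∧ sc y = 1) ∨ (x : ℕ) = 0) {pq : Fin n × Fin n}
    (h : pq ∈ (Pairs n).erase (x, y)) : sc pq.2 = 1 := by
  obtain ⟨p, q⟩ := pq
  rw [Finset.mem_erase, Pairs, Finset.mem_filter] at h
  obtain ⟨hne, _, hlt⟩ := h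
  dsimp only at hne hlt
  by_cases hqx : q = x
  · rcases hsc1' with ⟨h1, _⟩ | h0
    · show sc q = 1; rw [hqx]; exact h1
    · exfalso
      rw [Fin.lt_def] at hlt
      rw [hqx] at hlt
      omega
  · by_cases hqy : q = y
    · rcases hsc1' with ⟨_, h2⟩ | h0
      · show sc q = 1; rw [hqy]; exact h2
      · exfalso
        have hpx : p ≠ x := by
          intro hp
          exact hne (by rw [hp, hqy])
        rw [Fin.lt_def, hqy] at hlt
        have : (p : ℕ) ≠ (x : ℕ) := fun hh => hpx (Fin.ext hh)
        omega
    · exact hsc1 q hqx hqy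

lemma xy_mem_pairs (hadj : (y : ℕ) = (x : ℕ) + 1) : (x, y) ∈ Pairs n := by
  simp only [Pairs, Finset.mem_filter, Finset.mem_univ, true_and]
  rw [Fin.lt_def]; omega

lemma F_of_rel (hw : IsGeen e n w) (hadj : (y : ℕ) = (x : ℕ) + 1)
    (hsc0 : ∀ p, sc p ≠ 0) (hsc1 : ∀ p, p ≠ x → p ≠ y → sc p = 1)
    (hsc1' : (sc x = 1 ∧ sc y = 1) ∨ (x : ℕ) = 0)
    (hrel : ∀ p q, w' p q = sc p * w (Equiv.swap x y p) q) :
    F w' + cost w x y = F w + cost w' x y := by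
  have hmem := xy_mem_pairs (n := n) hadj
  have h1 : cost w' x y + ∑ pq ∈ (Pairs n).erase (x, y), cost w' pq.1 pq.2 = F w' := by
    rw [F]
    exact Finset.add_sum_erase (Pairs n) (fun pq => cost w' pq.1 pq.2) hmem
  have h2 : cost w x y + ∑ pq ∈ (Pairs n).erase (x, y), cost w pq.1 pq.2 = F w := by
    rw [F]
    exact Finset.add_sum_erase (Pairs n) (fun pq => cost w pq.1 pq.2) hmem
  have h3 : ∑ pq ∈ (Pairs n).erase (x, y), cost w' pq.1 pq.2
      = ∑ pq ∈ (Pairs n).erase (x, y), cost w pq.1 pq.2 := by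
    refine Finset.sum_nbij' (fun pq => (Equiv.swap x y pq.1, Equiv.swap x y pq.2))
      (fun pq => (Equiv.swap x y pq.1, Equiv.swap x y pq.2))
      (fun a ha => swap_pair_mem hadj ha) (fun a ha => swap_pair_mem hadj ha)
      (fun a _ => by simp [Equiv.swap_apply_self]) (fun a _ => by simp [Equiv.swap_apply_self])
      (fun a ha => ?_)
    exact cost_of_rel hw hsc0 hrel (sc_eq_one_of_mem hadj hsc1 hsc1' ha)
  omega

lemma cost_w'_le (hw : IsGeen e n w) (hxy : x ≠ y) (hsc0 : ∀ p, sc p ≠ 0)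
    (hrel : ∀ p q, w' p q = sc p * w (Equiv.swap x y p) q) :
    cost w' x y ≤ cost w x y + 1 := by
  have hx := col_of_rel hw hsc0 hrel x
  have hy := col_of_rel hw hsc0 hrel y
  rw [Equiv.swap_apply_left] at hx
  rw [Equiv.swap_apply_right] at hy
  by_cases h : col w y < col w x
  · rw [cost_of_lt h]
    have : cost w' x y ≤ 2 := by
      rw [cost]; split_ifs <;> omega
    omega
  · have hne : col w x ≠ col w y := fun h => hxy (col_injective hw h)
    have hlt : col w x < col w y := lt_of_le_of_ne (not_lt.1 h) hne
    have : col w' y < col w' x := by rw [hx, hy]; exact hlt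
    rw [cost_of_lt this]
    omega

end rel

section generators

variable {w : Matrix (Fin n) (Fin n) ℂ}

/-- Scalars for `tmat`. -/
noncomputable def tsc (e k : ℕ) (x y : Fin n) : Fin n → ℂ := fun p =>
  if p = x then (zeta e)⁻¹ ^ k else if p = y then zeta e ^ k else 1

lemma tsc_ne_zero (he : 1 ≤ e) (k : ℕ) (x y : Fin n) (p : Fin n) : tsc e k x y p ≠ 0 := by
  rw [tsc]
  split_ifs
  · exact pow_ne_zero _ (inv_ne_zero (zeta_ne_zero e))
  · exact pow_ne_zero _ (zeta_ne_zero e)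
  · exact one_ne_zero

lemma tsc_pow (he : 1 ≤ e) (k : ℕ) (x y : Fin n) (p : Fin n) : tsc e k x y p ^ e = 1 := by
  rw [tsc]
  split_ifs
  · exact zeta_inv_pow_pow he k
  · exact zeta_pow_pow he k
  · exact one_pow e

lemma prod_ite_two (x y : Fin n) (hxy : x ≠ y) (A B : ℂ) (hAB : A * B = 1) :
    ∏ p, (if p = x then A else if p = y then B else 1) = 1 := by
  classical
  have hsub : ({x, y} : Finset (Fin n)) ⊆ Finset.univ := Finset.subset_univ _
  rw [← Finset.prod_sdiff hsub]
  have h1 : ∏ p ∈ Finset.univ \ {x, y}, (if p = x then A else if p = y then B else 1) = 1 := by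
    refine Finset.prod_eq_one fun p hp => ?_
    simp only [Finset.mem_sdiff, Finset.mem_insert, Finset.mem_singleton] at hp
    rw [if_neg (fun h => hp.2 (Or.inl h)), if_neg (fun h => hp.2 (Or.inr h))]
  have h2 : ∏ p ∈ ({x, y} : Finset (Fin n)), (if p = x then A else if p = y then B else 1)
      = A * B := by
    rw [Finset.prod_pair hxy, if_pos rfl, if_neg (Ne.symm hxy), if_pos rfl]
  rw [h1, h2, one_mul, hAB]

lemma tsc_prod (he : 1 ≤ e) (k : ℕ) (x y : Fin n) (hxy : x ≠ y) :
    ∏ p, tsc e k x y p = 1 := by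
  refine prod_ite_two x y hxy _ _ ?_
  rw [← mul_pow, inv_mul_cancel₀ (zeta_ne_zero e), one_pow]

lemma tsc_mul_swap (he : 1 ≤ e) (k : ℕ) (x y : Fin n) (hxy : x ≠ y) (p : Fin n) :
    tsc e k x y p * tsc e k x y (Equiv.swap x y p) = 1 := by
  by_cases hpx : p = x
  · subst hpx
    rw [Equiv.swap_apply_left, tsc, tsc, if_pos rfl, if_neg (Ne.symm hxy), if_pos rfl,
      ← mul_pow, inv_mul_cancel₀ (zeta_ne_zero e), one_pow]
  · by_cases hpy : p = y
    · subst hpy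
      rw [Equiv.swap_apply_right, tsc, tsc, if_neg (Ne.symm hxy), if_pos rfl, if_pos rfl,
        ← mul_pow, mul_inv_cancel₀ (zeta_ne_zero e), one_pow]
    · rw [Equiv.swap_apply_of_ne_of_ne hpx hpy, tsc, if_neg hpx, if_neg hpy, one_mul]

lemma tmat_apply' (k : ℕ) (p q : Fin n) :
    tmat e n k p q =
      if (p : ℕ) = 0 ∧ (q : ℕ) = 1 then (zeta e)⁻¹ ^ k
      else if (p : ℕ) = 1 ∧ (q : ℕ) = 0 then zeta e ^ k
      else if (p : ℕ) = (q : ℕ) ∧ 2 ≤ (p : ℕ) then 1 else 0 := rfl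

lemma smat_apply' (j : ℕ) (p q : Fin n) :
    smat n j p q =
      if (p : ℕ) = j - 2 ∧ (q : ℕ) = j - 1 then 1
      else if (p : ℕ) = j - 1 ∧ (q : ℕ) = j - 2 then 1
      else if (p : ℕ) = (q : ℕ) ∧ (p : ℕ) ≠ j - 2 ∧ (p : ℕ) ≠ j - 1 then 1 else 0 := rfl

lemma tmat_rel (k : ℕ) (w : Matrix (Fin n) (Fin n) ℂ) {x y : Fin n}
    (hx : (x : ℕ) = 0) (hy : (y : ℕ) = 1) (p q : Fin n) :
    (tmat e n k * w) p q = tsc e k x y p * w (Equiv.swap x y p) q := by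
  rw [Matrix.mul_apply]
  by_cases hpx : p = x
  · subst hpx
    rw [Equiv.swap_apply_left, tsc, if_pos rfl]
    have hsum : ∑ l, tmat e n k p l * w l q = tmat e n k p y * w y q := by
      refine Finset.sum_eq_single y (fun b _ hb => ?_) (fun h => absurd (Finset.mem_univ y) h)
      have hbv : (b : ℕ) ≠ 1 := fun h => hb (Fin.ext (h.trans hy.symm))
      rw [tmat_apply', if_neg (fun hh => hbv hh.2),
        if_neg (fun hh => by obtain ⟨h1, _⟩ := hh; omega),
        if_neg (fun hh => by obtain ⟨_, h2⟩ := hh; omega), zero_mul]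
    rw [hsum, tmat_apply', if_pos ⟨hx, hy⟩]
  · by_cases hpy : p = y
    · subst hpy
      rw [Equiv.swap_apply_right, tsc, if_neg hpx, if_pos rfl]
      have hsum : ∑ l, tmat e n k p l * w l q = tmat e n k p x * w x q := by
        refine Finset.sum_eq_single x (fun b _ hb => ?_) (fun h => absurd (Finset.mem_univ x) h)
        have hbv : (b : ℕ) ≠ 0 := fun h => hb (Fin.ext (h.trans hx.symm))
        rw [tmat_apply', if_neg (fun hh => by obtain ⟨h1, _⟩ := hh; omega),
          if_neg (fun hh => hbv hh.2),
          if_neg (fun hh => by obtain ⟨_, h2⟩ := hh; omega), zero_mul]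
      rw [hsum, tmat_apply', if_neg (fun hh => by obtain ⟨h1, _⟩ := hh; omega),
        if_pos ⟨hy, hx⟩]
    · have hp0 : (p : ℕ) ≠ 0 := fun h => hpx (Fin.ext (h.trans hx.symm))
      have hp1 : (p : ℕ) ≠ 1 := fun h => hpy (Fin.ext (h.trans hy.symm))
      have hp2 : 2 ≤ (p : ℕ) := by omega
      rw [Equiv.swap_apply_of_ne_of_ne hpx hpy, tsc, if_neg hpx, if_neg hpy, one_mul]
      have hsum : ∑ l, tmat e n k p l * w l q = tmat e n k p p * w p q := by
        refine Finset.sum_eq_single p (fun b _ hb => ?_) (fun h => absurd (Finset.mem_univ p) h)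
        have hbv : (p : ℕ) ≠ (b : ℕ) := fun h => hb (Fin.ext h).symm
        rw [tmat_apply', if_neg (fun hh => hp0 hh.1), if_neg (fun hh => hp1 hh.1),
          if_neg (fun hh => hbv hh.1), zero_mul]
      rw [hsum, tmat_apply', if_neg (fun hh => hp0 hh.1), if_neg (fun hh => hp1 hh.1),
        if_pos ⟨rfl, hp2⟩, one_mul]

lemma smat_rel (j : ℕ) (h3 : 3 ≤ j) (hjn : j ≤ n) (w : Matrix (Fin n) (Fin n) ℂ)
    {x y : Fin n} (hx : (x : ℕ) = j - 2) (hy : (y : ℕ) = j - 1) (p q : Fin n) :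
    (smat n j * w) p q = w (Equiv.swap x y p) q := by
  rw [Matrix.mul_apply]
  by_cases hpx : p = x
  · subst hpx
    rw [Equiv.swap_apply_left]
    have hsum : ∑ l, smat n j p l * w l q = smat n j p y * w y q := by
      refine Finset.sum_eq_single y (fun b _ hb => ?_) (fun h => absurd (Finset.mem_univ y) h)
      have hbv : (b : ℕ) ≠ j - 1 := fun h => hb (Fin.ext (h.trans hy.symm))
      rw [smat_apply', if_neg (fun hh => hbv hh.2),
        if_neg (fun hh => by obtain ⟨h1, _⟩ := hh; omega),
        if_neg (fun hh => by obtain ⟨_, h2, _⟩ := hh; omega), zero_mul]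
    rw [hsum, smat_apply', if_pos ⟨hx, hy⟩, one_mul]
  · by_cases hpy : p = y
    · subst hpy
      rw [Equiv.swap_apply_right]
      have hsum : ∑ l, smat n j p l * w l q = smat n j p x * w x q := by
        refine Finset.sum_eq_single x (fun b _ hb => ?_) (fun h => absurd (Finset.mem_univ x) h)
        have hbv : (b : ℕ) ≠ j - 2 := fun h => hb (Fin.ext (h.trans hx.symm))
        rw [smat_apply', if_neg (fun hh => by obtain ⟨h1, _⟩ := hh; omega),
          if_neg (fun hh => hbv hh.2),
          if_neg (fun hh => by obtain ⟨_, _, h2⟩ := hh; omega), zero_mul]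
      rw [hsum, smat_apply', if_neg (fun hh => by obtain ⟨h1, _⟩ := hh; omega),
        if_pos ⟨hy, hx⟩, one_mul]
    · have hp2 : (p : ℕ) ≠ j - 2 := fun h => hpx (Fin.ext (h.trans hx.symm))
      have hp1 : (p : ℕ) ≠ j - 1 := fun h => hpy (Fin.ext (h.trans hy.symm))
      rw [Equiv.swap_apply_of_ne_of_ne hpx hpy]
      have hsum : ∑ l, smat n j p l * w l q = smat n j p p * w p q := by
        refine Finset.sum_eq_single p (fun b _ hb => ?_) (fun h => absurd (Finset.mem_univ p) h)
        have hbv : (p : ℕ) ≠ (b : ℕ) := fun h => hb (Fin.ext h).symm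
        rw [smat_apply', if_neg (fun hh => hp2 hh.1), if_neg (fun hh => hp1 hh.1),
          if_neg (fun hh => hbv hh.1), zero_mul]
      rw [hsum, smat_apply', if_neg (fun hh => hp2 hh.1), if_neg (fun hh => hp1 hh.1),
        if_pos ⟨rfl, hp2, hp1⟩, one_mul]

end generators

lemma isGeen_one (he : 1 ≤ e) : IsGeen e n (1 : Matrix (Fin n) (Fin n) ℂ) := by
  refine ⟨fun i => ⟨i, ?_, fun j hj => ?_⟩, fun j => ⟨j, ?_, fun i hi => ?_⟩,
    fun i j hij => ?_, ?_⟩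
  · show (1 : Matrix (Fin n) (Fin n) ℂ) i i ≠ 0
    rw [Matrix.one_apply_eq]; exact one_ne_zero
  · show j = i
    by_contra hne
    exact hj (Matrix.one_apply_ne fun h => hne h.symm)
  · show (1 : Matrix (Fin n) (Fin n) ℂ) j j ≠ 0
    rw [Matrix.one_apply_eq]; exact one_ne_zero
  · show i = j
    by_contra hne
    exact hi (Matrix.one_apply_ne fun h => hne h)
  · by_cases h : i = j
    · subst h; rw [Matrix.one_apply_eq]; exact one_pow e
    · exact absurd (Matrix.one_apply_ne h) hij
  · have h1 : ∀ i : Fin n, ∑ j, (1 : Matrix (Fin n) (Fin n) ℂ) i j = 1 := by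
      intro i
      simp [Matrix.one_apply]
    simp [h1]

lemma col_one (p : Fin n) : col (1 : Matrix (Fin n) (Fin n) ℂ) p = p := by
  have h1 : (1 : Matrix (Fin n) (Fin n) ℂ) p p ≠ 0 := by
    rw [Matrix.one_apply_eq]; exact one_ne_zero
  have he1 : (1:ℕ) ≤ 1 := le_refl 1
  exact (eq_col ((isGeen_one (e := 1) he1).1 p) h1).symm

lemma F_one : F (1 : Matrix (Fin n) (Fin n) ℂ) = 0 := by
  refine Finset.sum_eq_zero fun pq hpq => ?_
  simp only [Pairs, Finset.mem_filter, Finset.mem_univ, true_and] at hpq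
  refine cost_of_one ?_ ?_
  · rw [col_one, col_one]; exact not_lt.2 hpq.le
  · rw [col_one, Matrix.one_apply_eq]

lemma strictMono_fin_le {f : Fin n → Fin n} (hf : StrictMono f) (i : Fin n) :
    (i : ℕ) ≤ (f i : ℕ) := by
  have key : ∀ m : ℕ, ∀ i : Fin n, (i : ℕ) = m → m ≤ (f i : ℕ) := by
    intro m
    induction m with
    | zero => intro i _; omega
    | succ m ih =>
      intro i him
      have hm : m < n := by omega
      have hji : (⟨m, hm⟩ : Fin n) < i := by rw [Fin.lt_def]; simp; omega
      have h1 := ih ⟨m, hm⟩ rfl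
      have h2 := hf hji
      rw [Fin.lt_def] at h2
      omega
  exact key _ i rfl

lemma strictMono_fin_id {f : Fin n → Fin n} (hf : StrictMono f) (i : Fin n) : f i = i := by
  have h1 := strictMono_fin_le hf i
  have hf' : StrictMono (fun j : Fin n => (f j.rev).rev) := by
    intro a b hab
    have : b.rev < a.rev := Fin.rev_lt_rev.2 hab
    have h2 := hf this
    exact Fin.rev_lt_rev.2 h2
  have h3 := strictMono_fin_le hf' i.rev
  simp only [Fin.rev_rev] at h3
  rw [Fin.val_rev, Fin.val_rev] at h3
  have h4 : (f i : ℕ) < n := (f i).isLt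
  have h5 : (i : ℕ) < n := i.isLt
  exact Fin.ext (by omega)

lemma eq_one_of_F_eq_zero (he : 1 ≤ e) (hn : 2 ≤ n) {w : Matrix (Fin n) (Fin n) ℂ}
    (hw : IsGeen e n w) (hF : F w = 0) : w = 1 := by
  have hc : ∀ p q : Fin n, p < q → cost w p q = 0 := by
    intro p q hpq
    refine Finset.sum_eq_zero_iff.1 hF (p, q) ?_
    simp only [Pairs, Finset.mem_filter, Finset.mem_univ, true_and]
    exact hpq
  have hmono : StrictMono (col w) := by
    intro a b hab
    have h0 := (cost_eq_zero_iff.1 (hc a b hab)).1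
    have hne : col w a ≠ col w b := fun h => (ne_of_lt hab) (col_injective hw h)
    exact lt_of_le_of_ne (not_lt.1 h0) hne
  have hcol : ∀ p, col w p = p := strictMono_fin_id hmono
  set x0 : Fin n := ⟨0, by omega⟩ with hx0
  have hpiv : ∀ q : Fin n, q ≠ x0 → w q q = 1 := by
    intro q hq
    have hlt : x0 < q := by
      rw [Fin.lt_def]
      have : (q : ℕ) ≠ 0 := fun h => hq (Fin.ext h)
      simp [hx0]; omega
    have h0 := (cost_eq_zero_iff.1 (hc x0 q hlt)).2
    rwa [hcol q] at h0
  have hprod : ∏ p, w p p = 1 := by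
    have h1 : ∀ p : Fin n, ∑ q, w p q = w p p := by
      intro p
      rw [row_sum (hw.1 p), hcol p]
    calc ∏ p, w p p = ∏ p, ∑ q, w p q := Finset.prod_congr rfl fun p _ => (h1 p).symm
      _ = 1 := hw.2.2.2
  have hx0piv : w x0 x0 = 1 := by
    have h2 : ∏ p, w p p = w x0 x0 :=
      Finset.prod_eq_single x0 (fun b _ hb => hpiv b hb) (fun h => absurd (Finset.mem_univ x0) h)
    rw [← h2, hprod]
  ext p q
  by_cases hpq : p = q
  · subst hpq
    rw [Matrix.one_apply_eq]
    by_cases hp : p = x0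
    · subst hp; exact hx0piv
    · exact hpiv p hp
  · rw [Matrix.one_apply_ne hpq]
    refine apply_eq_zero (hw.1 p) ?_
    rw [hcol p]; exact fun h => hpq h.symm

/-- Lower bound: `F` of a product of `m` generators is at most `m`. -/
lemma F_le_length (he : 1 ≤ e) (hn : 2 ≤ n) :
    ∀ L : List (Matrix (Fin n) (Fin n) ℂ), (∀ g ∈ L, g ∈ genSet e n) →
      IsGeen e n L.prod ∧ F L.prod ≤ L.length := by
  intro L
  induction L with
  | nil =>
    intro _
    simp only [List.prod_nil, List.length_nil]
    exact ⟨isGeen_one he, le_of_eq F_one⟩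
  | cons g L ih =>
    intro hL
    obtain ⟨hIG, hFle⟩ := ih fun g' hg' => hL g' (List.mem_cons_of_mem _ hg')
    have hg : g ∈ genSet e n := hL g List.mem_cons_self
    rw [List.prod_cons]
    set u := L.prod
    rcases hg with ⟨i, hie, rfl⟩ | ⟨j, h3, hjn, rfl⟩
    · set x : Fin n := ⟨0, by omega⟩
      set y : Fin n := ⟨1, by omega⟩
      have hx : (x : ℕ) = 0 := rfl
      have hy : (y : ℕ) = 1 := rfl
      have hxy : x ≠ y := fun h => by
        have := congrArg Fin.val h; rw [hx, hy] at this; omega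
      have hrel := fun p q => tmat_rel (e := e) i u hx hy p q
      have hsc0 := tsc_ne_zero (n := n) he i x y
      have hGI : IsGeen e n (tmat e n i * u) :=
        isGeen_of_rel hIG hsc0 (tsc_pow he i x y) (tsc_prod he i x y hxy) hrel
      refine ⟨hGI, ?_⟩
      have hF := F_of_rel hIG (by rw [hx, hy]) hsc0
        (fun p hpx hpy => by rw [tsc, if_neg hpx, if_neg hpy])
        (Or.inr hx) hrel
      have hle := cost_w'_le hIG hxy hsc0 hrel
      simp only [List.length_cons]
      omega
    · set x : Fin n := ⟨j - 2, by omega⟩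
      set y : Fin n := ⟨j - 1, by omega⟩
      have hx : (x : ℕ) = j - 2 := rfl
      have hy : (y : ℕ) = j - 1 := rfl
      have hxy : x ≠ y := fun h => by
        have := congrArg Fin.val h; rw [hx, hy] at this; omega
      have hrel : ∀ p q, (smat n j * u) p q = (fun _ : Fin n => (1:ℂ)) p * u (Equiv.swap x y p) q := by
        intro p q
        rw [one_mul]
        exact smat_rel j h3 hjn u hx hy p q
      have hsc0 : ∀ p : Fin n, (fun _ : Fin n => (1:ℂ)) p ≠ 0 := fun p => one_ne_zero
      have hGI : IsGeen e n (smat n j * u) :=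
        isGeen_of_rel hIG hsc0 (fun p => one_pow e) (Finset.prod_const_one) hrel
      refine ⟨hGI, ?_⟩
      have hF := F_of_rel hIG (by rw [hx, hy]; omega) hsc0
        (fun p _ _ => rfl) (Or.inl ⟨rfl, rfl⟩) hrel
      have hle := cost_w'_le hIG hxy hsc0 hrel
      simp only [List.length_cons]
      omega

/-- Descent step: if `F w ≠ 0` there is a generator strictly decreasing `F`. -/
lemma exists_descent (he : 1 ≤ e) (hn : 2 ≤ n) {w : Matrix (Fin n) (Fin n) ℂ}
    (hw : IsGeen e n w) (hF : F w ≠ 0) :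
    ∃ g ∈ genSet e n, IsGeen e n (g * w) ∧ F (g * w) + 1 = F w ∧ g * (g * w) = w := by
  classical
  set Q : Finset (Fin n) := Finset.univ.filter (fun q => ∃ p, p < q ∧ cost w p q ≠ 0) with hQ
  have hne : Q.Nonempty := by
    by_contra hempty
    apply hF
    refine Finset.sum_eq_zero fun pq hpq => ?_
    simp only [Pairs, Finset.mem_filter, Finset.mem_univ, true_and] at hpq
    by_contra hc
    refine hempty ⟨pq.2, ?_⟩
    rw [hQ, Finset.mem_filter]
    exact ⟨Finset.mem_univ _, pq.1, hpq, hc⟩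
  set q0 : Fin n := Q.min' hne with hq0def
  have hq0mem : q0 ∈ Q := Q.min'_mem hne
  obtain ⟨p1, hp1, hcost1⟩ : ∃ p, p < q0 ∧ cost w p q0 ≠ 0 := by
    simpa only [hQ, Finset.mem_filter, Finset.mem_univ, true_and] using hq0mem
  have hbelow : ∀ p q : Fin n, p < q → q < q0 → cost w p q = 0 := by
    intro p q hpq hq
    by_contra hc
    have : q ∈ Q := by
      simp only [hQ, Finset.mem_filter, Finset.mem_univ, true_and]
      exact ⟨p, hpq, hc⟩
    exact absurd (Q.min'_le q this) (not_le.2 hq)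
  -- pivots of rows strictly between 0 and q0 are 1
  have hpiv : ∀ p : Fin n, 0 < (p : ℕ) → p < q0 → w p (col w p) = 1 := by
    intro p hp0 hpq0
    set z : Fin n := ⟨0, by omega⟩
    have hzp : z < p := by rw [Fin.lt_def]; exact hp0
    exact (cost_eq_zero_iff.1 (hbelow z p hzp hpq0)).2
  have hincr : ∀ p q : Fin n, p < q → q < q0 → col w p < col w q := by
    intro p q hpq hq
    have h0 := (cost_eq_zero_iff.1 (hbelow p q hpq hq)).1
    have hne' : col w p ≠ col w q := fun h => (ne_of_lt hpq) (col_injective hw h)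
    exact lt_of_le_of_ne (not_lt.1 h0) hne'
  -- q0 > 0 since p1 < q0
  have hq0pos : 0 < (q0 : ℕ) := by
    rw [Fin.lt_def] at hp1; omega
  by_cases hq01 : (q0 : ℕ) = 1
  · -- use a t-generator
    set x : Fin n := ⟨0, by omega⟩
    set y : Fin n := q0
    have hx : (x : ℕ) = 0 := rfl
    have hy : (y : ℕ) = 1 := hq01
    have hxy : x ≠ y := fun h => by
      have := congrArg Fin.val h; rw [hx, hy] at this; omega
    have hp1x : p1 = x := by
      rw [Fin.lt_def] at hp1
      exact Fin.ext (by rw [hx]; omega)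
    rw [hp1x] at hcost1
    have hcxy : col w x ≠ col w y := fun h => hxy (col_injective hw h)
    -- choose k
    rcases lt_or_gt_of_ne hcxy with hlt | hgt
    · -- no inversion: a_2 ≠ 1, any k works; use k = 0
      have hpivy : w y (col w y) ≠ 1 := by
        intro h1
        exact hcost1 (cost_of_one (not_lt.2 hlt.le) h1)
      refine ⟨tmat e n 0, Or.inl ⟨0, by omega, rfl⟩, ?_⟩
      have hrel := fun p q => tmat_rel (e := e) 0 w hx hy p q
      have hsc0 := tsc_ne_zero (n := n) he 0 x y
      have hGI : IsGeen e n (tmat e n 0 * w) :=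
        isGeen_of_rel hw hsc0 (tsc_pow he 0 x y) (tsc_prod he 0 x y hxy) hrel
      have hFrel := F_of_rel hw (by rw [hx, hy]) hsc0
        (fun p hpx hpy => by rw [tsc, if_neg hpx, if_neg hpy]) (Or.inr hx) hrel
      have hcw : cost w x y = 2 := cost_of_ne_one (not_lt.2 hlt.le) hpivy
      have hcolx := col_of_rel hw hsc0 hrel x
      have hcoly := col_of_rel hw hsc0 hrel y
      rw [Equiv.swap_apply_left] at hcolx
      rw [Equiv.swap_apply_right] at hcoly
      have hcw' : cost (tmat e n 0 * w) x y = 1 := by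
        refine cost_of_lt ?_
        rw [hcolx, hcoly]; exact hlt
      refine ⟨hGI, by omega, ?_⟩
      ext p q
      rw [tmat_rel (e := e) 0 (tmat e n 0 * w) hx hy p q, hrel, Equiv.swap_apply_self,
        ← mul_assoc, tsc_mul_swap he 0 x y hxy p, one_mul]
    · -- inversion: choose k with ζ^k * a_1 = 1
      have ha1 : w x (col w x) ^ e = 1 := hw.2.2.1 _ _ (col_spec (hw.1 x))
      obtain ⟨k, hke, hk1⟩ := exists_pow_mul_eq_one he ha1
      refine ⟨tmat e n k, Or.inl ⟨k, hke, rfl⟩, ?_⟩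
      have hrel := fun p q => tmat_rel (e := e) k w hx hy p q
      have hsc0 := tsc_ne_zero (n := n) he k x y
      have hGI : IsGeen e n (tmat e n k * w) :=
        isGeen_of_rel hw hsc0 (tsc_pow he k x y) (tsc_prod he k x y hxy) hrel
      have hFrel := F_of_rel hw (by rw [hx, hy]) hsc0
        (fun p hpx hpy => by rw [tsc, if_neg hpx, if_neg hpy]) (Or.inr hx) hrel
      have hcw : cost w x y = 1 := cost_of_lt hgt
      have hcolx := col_of_rel hw hsc0 hrel x
      have hcoly := col_of_rel hw hsc0 hrel y
      rw [Equiv.swap_apply_left] at hcolx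
      rw [Equiv.swap_apply_right] at hcoly
      have hpiv' := pivot_of_rel hw hsc0 hrel y
      rw [Equiv.swap_apply_right] at hpiv'
      have hcw' : cost (tmat e n k * w) x y = 0 := by
        refine cost_of_one ?_ ?_
        · rw [hcolx, hcoly]; exact not_lt.2 hgt.le
        · rw [hpiv', tsc, if_neg (Ne.symm hxy), if_pos rfl]
          exact hk1
      refine ⟨hGI, by omega, ?_⟩
      ext p q
      rw [tmat_rel (e := e) k (tmat e n k * w) hx hy p q, hrel, Equiv.swap_apply_self,
        ← mul_assoc, tsc_mul_swap he k x y hxy p, one_mul]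
  · -- q0 ≥ 2 : use an s-generator
    have hq02 : 2 ≤ (q0 : ℕ) := by omega
    set x : Fin n := ⟨(q0 : ℕ) - 1, by omega⟩
    set y : Fin n := q0
    set j : ℕ := (q0 : ℕ) + 1 with hjdef
    have hx : (x : ℕ) = j - 2 := by simp [hjdef]; rfl
    have hy : (y : ℕ) = j - 1 := by simp [hjdef]; rfl
    have hxy : x ≠ y := fun h => by
      have := congrArg Fin.val h
      rw [hx, hy] at this
      omega
    have h3j : 3 ≤ j := by omega
    have hjn : j ≤ n := by have := q0.isLt; omega
    have hxlty : x < y := by rw [Fin.lt_def]; simp; omega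
    have hrel : ∀ p q, (smat n j * w) p q = (fun _ : Fin n => (1:ℂ)) p * w (Equiv.swap x y p) q := by
      intro p q
      rw [one_mul]
      exact smat_rel j h3j hjn w hx hy p q
    have hsc0 : ∀ p : Fin n, (fun _ : Fin n => (1:ℂ)) p ≠ 0 := fun p => one_ne_zero
    have hGI : IsGeen e n (smat n j * w) :=
      isGeen_of_rel hw hsc0 (fun p => one_pow e) Finset.prod_const_one hrel
    have hFrel := F_of_rel hw (by rw [hx, hy]; omega) hsc0
      (fun p _ _ => rfl) (Or.inl ⟨rfl, rfl⟩) hrel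
    have hcolx := col_of_rel hw hsc0 hrel x
    have hcoly := col_of_rel hw hsc0 hrel y
    rw [Equiv.swap_apply_left] at hcolx
    rw [Equiv.swap_apply_right] at hcoly
    have hpivx : w x (col w x) = 1 := by
      refine hpiv x (by rw [hx]; omega) hxlty
    have hcxy : col w x ≠ col w y := fun h => hxy (col_injective hw h)
    refine ⟨smat n j, Or.inr ⟨j, h3j, hjn, rfl⟩, hGI, ?_, ?_⟩
    · rcases lt_or_gt_of_ne hcxy with hlt | hgt
      · -- col x < col y: pivot y ≠ 1
        have hpivy : w y (col w y) ≠ 1 := by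
          intro h1
          -- then cost w p1 y = 0, contradiction
          apply hcost1
          refine cost_of_one ?_ h1
          intro hclt
          -- col w y < col w p1; but col w p1 ≤ col w x
          have hp1lex : p1 ≤ x := by
            rw [Fin.le_def]
            rw [Fin.lt_def] at hp1
            simp
            omega
          rcases eq_or_lt_of_le hp1lex with heq | hlt'
          · rw [heq] at hclt
            exact absurd hlt (not_lt.2 hclt.le)
          · have := hincr p1 x hlt' hxlty
            exact absurd (lt_trans hclt this) (not_lt.2 hlt.le)
        have hcw : cost w x y = 2 := cost_of_ne_one (not_lt.2 hlt.le) hpivy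
        have hcw' : cost (smat n j * w) x y = 1 := by
          refine cost_of_lt ?_
          rw [hcolx, hcoly]; exact hlt
        omega
      · -- inversion at (x, y)
        have hcw : cost w x y = 1 := cost_of_lt hgt
        have hpiv' := pivot_of_rel hw hsc0 hrel y
        rw [Equiv.swap_apply_right] at hpiv'
        have hcw' : cost (smat n j * w) x y = 0 := by
          refine cost_of_one ?_ ?_
          · rw [hcolx, hcoly]; exact not_lt.2 hgt.le
          · rw [hpiv', one_mul]
            exact hpivx
        omega
    · ext p q
      rw [smat_rel j h3j hjn (smat n j * w) hx hy p q, hrel, Equiv.swap_apply_self, one_mul]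

/-- Upper bound: every element of the group is a product of `F w` generators. -/
lemma exists_word (he : 1 ≤ e) (hn : 2 ≤ n) {w : Matrix (Fin n) (Fin n) ℂ}
    (hw : IsGeen e n w) :
    ∃ L : List (Matrix (Fin n) (Fin n) ℂ),
      (∀ g ∈ L, g ∈ genSet e n) ∧ L.prod = w ∧ L.length = F w := by
  have key : ∀ m : ℕ, ∀ w : Matrix (Fin n) (Fin n) ℂ, IsGeen e n w → F w = m →
      ∃ L : List (Matrix (Fin n) (Fin n) ℂ),
        (∀ g ∈ L, g ∈ genSet e n) ∧ L.prod = w ∧ L.length = F w := by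
    intro m
    induction m using Nat.strong_induction_on with
    | _ m ih =>
      intro w hw hFw
      rcases Nat.eq_zero_or_pos m with h0 | hpos
      · subst h0
        refine ⟨[], by simp, ?_, by simp [hFw]⟩
        rw [List.prod_nil, eq_one_of_F_eq_zero he hn hw hFw]
      · obtain ⟨g, hg, hGI, hFdec, hinv⟩ := exists_descent he hn hw (by omega)
        obtain ⟨L, hL1, hL2, hL3⟩ := ih (F (g * w)) (by omega) (g * w) hGI rfl
        refine ⟨g :: L, ?_, ?_, ?_⟩
        · intro g' hg'
          rcases List.mem_cons.1 hg' with rfl | hmem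
          · exact hg
          · exact hL1 g' hmem
        · rw [List.prod_cons, hL2, hinv]
        · simp only [List.length_cons, hL3]
          omega
  exact key (F w) w hw rfl

/-- `len` equals the explicit formula `F` on the group. -/
lemma len_eq_F (he : 1 ≤ e) (hn : 2 ≤ n) {w : Matrix (Fin n) (Fin n) ℂ}
    (hw : IsGeen e n w) : len e n w = F w := by
  set S := {l | ∃ L : List (Matrix (Fin n) (Fin n) ℂ),
    (∀ x ∈ L, x ∈ genSet e n) ∧ L.prod = w ∧ L.length = l} with hS
  obtain ⟨L, hL1, hL2, hL3⟩ := exists_word he hn hw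
  have hmem : F w ∈ S := ⟨L, hL1, hL2, hL3⟩
  refine le_antisymm (Nat.sInf_le hmem) ?_
  obtain ⟨L', hL'1, hL'2, hL'3⟩ := Nat.sInf_mem (⟨F w, hmem⟩ : S.Nonempty)
  have := (F_le_length he hn L' hL'1).2
  rw [hL'2] at this
  rw [len, ← hL'3]
  exact this

end CP

/-- Effect of left multiplication by `t_k` on the length.
Rows 1 and 2 (1-based) correspond to `r1, r2 : Fin n` with `r1 = 0`, `r2 = 1`;
`c r` is the unique nonzero column of row `r`, `a_1 = w r1 (c r1)`,
`a_2 = w r2 (c r2)`. -/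
theorem statement3 (e n : ℕ) (he : 1 ≤ e) (hn : 2 ≤ n)
    (w : Matrix (Fin n) (Fin n) ℂ) (hw : IsGeen e n w)
    (c : Fin n → Fin n) (hc : ∀ r, w r (c r) ≠ 0)
    (r1 r2 : Fin n) (hr1 : (r1 : ℕ) = 0) (hr2 : (r2 : ℕ) = 1) :
    (c r1 < c r2 → ∀ k, k ≤ e - 1 →
      (len e n (tmat e n k * w) + 1 = len e n w ↔ w r2 (c r2) ≠ 1)) ∧
    (c r2 < c r1 → ∀ k, k ≤ e - 1 →
      (len e n (tmat e n k * w) + 1 = len e n w ↔ w r1 (c r1) = (zeta e)⁻¹ ^ k)) := by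
  have hcol : ∀ r, c r = CP.col w r := fun r => CP.eq_col (hw.1 r) (hc r)
  have hxy : r1 ≠ r2 := fun h => by rw [h, hr2] at hr1; omega
  have hadj : (r2 : ℕ) = (r1 : ℕ) + 1 := by omega
  constructor
  · intro hlt k _
    have hrel := fun p q => CP.tmat_rel (e := e) k w hr1 hr2 p q
    have hsc0 := CP.tsc_ne_zero (n := n) he k r1 r2
    have hGI : IsGeen e n (tmat e n k * w) :=
      CP.isGeen_of_rel hw hsc0 (CP.tsc_pow he k r1 r2) (CP.tsc_prod he k r1 r2 hxy) hrel
    have hFrel := CP.F_of_rel hw hadj hsc0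
      (fun p hpx hpy => by rw [CP.tsc, if_neg hpx, if_neg hpy]) (Or.inr hr1) hrel
    have hcolx := CP.col_of_rel hw hsc0 hrel r1
    have hcoly := CP.col_of_rel hw hsc0 hrel r2
    rw [Equiv.swap_apply_left] at hcolx
    rw [Equiv.swap_apply_right] at hcoly
    have hltc : CP.col w r1 < CP.col w r2 := by rw [← hcol, ← hcol]; exact hlt
    have hcw' : CP.cost (tmat e n k * w) r1 r2 = 1 := by
      refine CP.cost_of_lt ?_
      rw [hcolx, hcoly]; exact hltc
    rw [CP.len_eq_F he hn hw, CP.len_eq_F he hn hGI]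
    rw [hcol r2]
    constructor
    · intro hlen hpiv1
      have hcw : CP.cost w r1 r2 = 0 := CP.cost_of_one (not_lt.2 hltc.le) hpiv1
      omega
    · intro hpiv1
      have hcw : CP.cost w r1 r2 = 2 := CP.cost_of_ne_one (not_lt.2 hltc.le) hpiv1
      omega
  · intro hlt k _
    have hrel := fun p q => CP.tmat_rel (e := e) k w hr1 hr2 p q
    have hsc0 := CP.tsc_ne_zero (n := n) he k r1 r2
    have hGI : IsGeen e n (tmat e n k * w) :=
      CP.isGeen_of_rel hw hsc0 (CP.tsc_pow he k r1 r2) (CP.tsc_prod he k r1 r2 hxy) hrel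
    have hFrel := CP.F_of_rel hw hadj hsc0
      (fun p hpx hpy => by rw [CP.tsc, if_neg hpx, if_neg hpy]) (Or.inr hr1) hrel
    have hcolx := CP.col_of_rel hw hsc0 hrel r1
    have hcoly := CP.col_of_rel hw hsc0 hrel r2
    rw [Equiv.swap_apply_left] at hcolx
    rw [Equiv.swap_apply_right] at hcoly
    have hltc : CP.col w r2 < CP.col w r1 := by rw [← hcol, ← hcol]; exact hlt
    have hcw : CP.cost w r1 r2 = 1 := CP.cost_of_lt hltc
    have hpiv' := CP.pivot_of_rel hw hsc0 hrel r2
    rw [Equiv.swap_apply_right] at hpiv'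
    have hpivval : (tmat e n k * w) r2 (CP.col (tmat e n k * w) r2)
        = zeta e ^ k * w r1 (CP.col w r1) := by
      rw [hpiv', CP.tsc, if_neg (Ne.symm hxy), if_pos rfl]
    have hnotlt : ¬ CP.col (tmat e n k * w) r2 < CP.col (tmat e n k * w) r1 := by
      rw [hcolx, hcoly]; exact not_lt.2 hltc.le
    rw [CP.len_eq_F he hn hw, CP.len_eq_F he hn hGI]
    rw [hcol r1]
    have hzk : zeta e ^ k ≠ 0 := pow_ne_zero _ (CP.zeta_ne_zero e)
    have hiff : w r1 (CP.col w r1) = (zeta e)⁻¹ ^ k ↔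
        zeta e ^ k * w r1 (CP.col w r1) = 1 := by
      rw [inv_pow]
      constructor
      · intro h; rw [h, mul_inv_cancel₀ hzk]
      · intro h
        field_simp at h ⊢
        linear_combination h
    rw [hiff]
    constructor
    · intro hlen
      by_contra hne1
      have hcw' : CP.cost (tmat e n k * w) r1 r2 = 2 :=
        CP.cost_of_ne_one hnotlt (by rw [hpivval]; exact hne1)
      omega
    · intro h1
      have hcw' : CP.cost (tmat e n k * w) r1 r2 = 0 :=
        CP.cost_of_one hnotlt (by rw [hpivval]; exact h1)
      omega
end
end

section
/- The maximal length over the Corran–Picantin generating set of an element of G(e,e,n) (for e > 1, n ≥ 2) is n(n−1), and it is attained exactly by the diagonal matrices w such that w[i,i] is an e-th root of unity different from 1 for all 2 ≤ i ≤ n (and w[1,1] is determined by the product-1 condition). The number of such elements is (e−1)^{n−1}. -/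
noncomputable section

open Matrix

namespace Aux

variable {e n : ℕ}

/-- cast a `ZMod e` exponent to a complex root of unity -/
def zc (e : ℕ) (x : ZMod e) : ℂ := zeta e ^ x.val

lemma zeta_prim (he : 0 < e) : IsPrimitiveRoot (zeta e) e :=
  Complex.isPrimitiveRoot_exp e he.ne'

lemma zeta_ne_zero (he : 0 < e) : zeta e ≠ 0 := (zeta_prim he).ne_zero he.ne'

lemma zeta_pow_e (he : 0 < e) : zeta e ^ e = 1 := (zeta_prim he).pow_eq_one

lemma zeta_pow_mod (he : 0 < e) (m : ℕ) : zeta e ^ (m % e) = zeta e ^ m := by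
  conv_rhs => rw [← Nat.div_add_mod m e]
  rw [pow_add, pow_mul, zeta_pow_e he, one_pow, one_mul]

lemma zc_natCast (he : 0 < e) (m : ℕ) : zc e (m : ZMod e) = zeta e ^ m := by
  haveI : NeZero e := ⟨he.ne'⟩
  rw [zc, ZMod.val_natCast, zeta_pow_mod he]

lemma zc_zero : zc e 0 = 1 := by
  cases e with
  | zero => simp [zc, ZMod.val, zeta]
  | succ e' => simp [zc]

lemma zc_add (he : 0 < e) (x y : ZMod e) : zc e (x + y) = zc e x * zc e y := by
  haveI : NeZero e := ⟨he.ne'⟩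
  rw [zc, ZMod.val_add, zeta_pow_mod he, pow_add]; rfl

lemma zc_ne_zero (he : 0 < e) (x : ZMod e) : zc e x ≠ 0 :=
  pow_ne_zero _ (zeta_ne_zero he)

lemma zc_pow_e (he : 0 < e) (x : ZMod e) : zc e x ^ e = 1 := by
  rw [zc, ← pow_mul, mul_comm, pow_mul, zeta_pow_e he, one_pow]

lemma zc_inj (he : 0 < e) {x y : ZMod e} (h : zc e x = zc e y) : x = y := by
  haveI : NeZero e := ⟨he.ne'⟩
  have := (zeta_prim he).pow_inj (ZMod.val_lt x) (ZMod.val_lt y) h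
  have h2 : ((x.val : ℕ) : ZMod e) = ((y.val : ℕ) : ZMod e) := by rw [this]
  rwa [ZMod.natCast_val, ZMod.natCast_val, ZMod.cast_id, ZMod.cast_id] at h2

lemma zc_eq_one_iff (he : 0 < e) (x : ZMod e) : zc e x = 1 ↔ x = 0 := by
  constructor
  · intro h; exact zc_inj he (h.trans zc_zero.symm)
  · rintro rfl; exact zc_zero

lemma zc_neg_natCast (he : 0 < e) (m : ℕ) :
    zc e (-(m : ZMod e)) = (zeta e)⁻¹ ^ m := by
  rw [inv_pow]
  refine eq_inv_of_mul_eq_one_left ?_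
  rw [← zc_natCast he, ← zc_add he, neg_add_cancel, zc_zero]

lemma zc_sum (he : 0 < e) {ι : Type*} (s : Finset ι) (f : ι → ZMod e) :
    ∏ i ∈ s, zc e (f i) = zc e (∑ i ∈ s, f i) := by
  classical
  induction s using Finset.induction with
  | empty => simp [zc_zero]
  | insert a s' hx ih =>
                    rw [Finset.prod_insert hx, Finset.sum_insert hx, zc_add he, ih]

/-- the monomial matrix with nonzero entry `zc (c p)` in row `p`, column `π p`. -/
def mmat (e : ℕ) {n : ℕ} (π : Equiv.Perm (Fin n)) (c : Fin n → ZMod e) :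
    Matrix (Fin n) (Fin n) ℂ :=
  Matrix.of fun p q => if q = π p then zc e (c p) else 0

lemma mmat_mul (he : 0 < e) (π ρ : Equiv.Perm (Fin n)) (c d : Fin n → ZMod e) :
    mmat e π c * mmat e ρ d = mmat e (π.trans ρ) (fun p => c p + d (π p)) := by
  ext p q
  rw [Matrix.mul_apply]
  rw [Finset.sum_eq_single (π p)]
  · simp only [mmat, Matrix.of_apply, Equiv.trans_apply, if_pos rfl]
    by_cases h : q = ρ (π p)
    · simp [h, zc_add he]
    · simp [h]
  · intro b _ hb
    simp [mmat, hb]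
  · intro h; exact absurd (Finset.mem_univ _) h

lemma mmat_one (he : 0 < e) : mmat e (1 : Equiv.Perm (Fin n)) 0 = 1 := by
  ext p q
  simp only [mmat, Matrix.of_apply, Equiv.Perm.coe_one, id_eq, Pi.zero_apply, zc_zero,
    Matrix.one_apply]
  by_cases h : q = p
  · simp [h]
  · rw [if_neg (fun hh : p = q => h hh.symm), if_neg h]

lemma mmat_inj (he : 0 < e) {π ρ : Equiv.Perm (Fin n)} {c d : Fin n → ZMod e}
    (h : mmat e π c = mmat e ρ d) : π = ρ ∧ c = d := by
  have key : ∀ p, π p = ρ p ∧ c p = d p := by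
    intro p
    have h1 := congrFun (congrFun h p) (π p)
    simp only [mmat, Matrix.of_apply, if_pos rfl] at h1
    by_cases h2 : π p = ρ p
    · rw [if_pos h2] at h1
      exact ⟨h2, zc_inj he h1⟩
    · rw [if_neg h2] at h1
      exact absurd h1 (zc_ne_zero he _)
  exact ⟨Equiv.ext fun p => (key p).1, funext fun p => (key p).2⟩

lemma mmat_row_sum (he : 0 < e) (π : Equiv.Perm (Fin n)) (c : Fin n → ZMod e) (p : Fin n) :
    ∑ q, mmat e π c p q = zc e (c p) := by
  rw [Finset.sum_eq_single (π p)]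
  · simp [mmat]
  · intro b _ hb; simp [mmat, hb]
  · intro h; exact absurd (Finset.mem_univ _) h

end Aux

namespace Aux

variable {e n : ℕ}

/-- charge function of a generator: swap at positions `(k, k+1)` transferring charge `i`. -/
def dchg (e : ℕ) {n : ℕ} (k : ℕ) (i : ZMod e) : Fin n → ZMod e :=
  fun p => if (p : ℕ) = k then -i else if (p : ℕ) = k + 1 then i else 0

def gperm {n : ℕ} (k : ℕ) (hk : k + 1 < n) : Equiv.Perm (Fin n) :=
  Equiv.swap ⟨k, Nat.lt_of_succ_lt hk⟩ ⟨k + 1, hk⟩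

/-- combinatorial generator data -/
def GenD (e n : ℕ) (π : Equiv.Perm (Fin n)) (d : Fin n → ZMod e) : Prop :=
  ∃ (k : ℕ) (i : ZMod e) (hk : k + 1 < n), (k = 0 ∨ i = 0) ∧ π = gperm k hk ∧ d = dchg e k i

lemma dchg_lo {k : ℕ} {p : Fin n} (i : ZMod e) (hp : (p : ℕ) = k) : dchg e k i p = -i := by
  simp [dchg, hp]

lemma dchg_hi {k : ℕ} {p : Fin n} (i : ZMod e) (hp : (p : ℕ) = k + 1) : dchg e k i p = i := by
  rw [dchg, if_neg (by omega), if_pos hp]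

lemma dchg_out {k : ℕ} {p : Fin n} (i : ZMod e) (hp1 : (p : ℕ) ≠ k) (hp2 : (p : ℕ) ≠ k + 1) :
    dchg e k i p = 0 := by
  rw [dchg, if_neg hp1, if_neg hp2]

lemma gperm_lo {k : ℕ} (hk : k + 1 < n) {p : Fin n} (hp : (p : ℕ) = k) :
    gperm k hk p = ⟨k + 1, hk⟩ := by
  rw [gperm, show p = ⟨k, Nat.lt_of_succ_lt hk⟩ from Fin.ext hp, Equiv.swap_apply_left]

lemma gperm_hi {k : ℕ} (hk : k + 1 < n) {p : Fin n} (hp : (p : ℕ) = k + 1) :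
    gperm k hk p = ⟨k, Nat.lt_of_succ_lt hk⟩ := by
  rw [gperm, show p = ⟨k + 1, hk⟩ from Fin.ext hp, Equiv.swap_apply_right]

lemma gperm_out {k : ℕ} (hk : k + 1 < n) {p : Fin n} (hp1 : (p : ℕ) ≠ k)
    (hp2 : (p : ℕ) ≠ k + 1) : gperm k hk p = p := by
  rw [gperm, Equiv.swap_apply_of_ne_of_ne]
  · intro hc; exact hp1 (by rw [hc])
  · intro hc; exact hp2 (by rw [hc])

lemma gperm_val {k : ℕ} (hk : k + 1 < n) (p : Fin n) :
    ((gperm k hk p : Fin n) : ℕ) = if (p : ℕ) = k then k + 1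
      else if (p : ℕ) = k + 1 then k else (p : ℕ) := by
  by_cases h1 : (p : ℕ) = k
  · rw [gperm_lo hk h1, if_pos h1]
  · rw [if_neg h1]
    by_cases h2 : (p : ℕ) = k + 1
    · rw [gperm_hi hk h2, if_pos h2]
    · rw [gperm_out hk h1 h2, if_neg h2]

lemma tmat_eq (he : 0 < e) (hn : 2 ≤ n) (i0 : ℕ) (hk : 0 + 1 < n) :
    tmat e n i0 = mmat e (gperm 0 hk) (dchg e 0 ((i0 : ZMod e))) := by
  ext p q
  simp only [tmat, mmat, Matrix.of_apply]
  by_cases hp0 : (p : ℕ) = 0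
  · rw [gperm_lo hk hp0, dchg_lo _ hp0]
    by_cases hq : (q : ℕ) = 1
    · rw [if_pos ⟨hp0, hq⟩, if_pos (Fin.ext hq : q = ⟨0 + 1, hk⟩), zc_neg_natCast he]
    · rw [if_neg (fun hc : _ ∧ (q : ℕ) = 1 => hq hc.2), if_neg (by omega), if_neg (by omega),
        if_neg (fun hc : q = ⟨0 + 1, hk⟩ => hq (by rw [hc]))]
  · rw [if_neg (fun hc : (p : ℕ) = 0 ∧ _ => hp0 hc.1)]
    by_cases hp1 : (p : ℕ) = 1
    · rw [gperm_hi hk hp1, dchg_hi _ hp1]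
      by_cases hq : (q : ℕ) = 0
      · rw [if_pos ⟨hp1, hq⟩, if_pos (Fin.ext hq : q = ⟨0, Nat.lt_of_succ_lt hk⟩),
          zc_natCast he]
      · rw [if_neg (fun hc : _ ∧ (q : ℕ) = 0 => hq hc.2), if_neg (by omega),
          if_neg (fun hc : q = ⟨0, Nat.lt_of_succ_lt hk⟩ => hq (by rw [hc]))]
    · rw [gperm_out hk hp0 (by omega), dchg_out _ hp0 (by omega),
        if_neg (fun hc : (p : ℕ) = 1 ∧ _ => hp1 hc.1), zc_zero]
      by_cases hq : q = p
      · rw [if_pos ⟨(by rw [hq]), (by omega)⟩, if_pos hq]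
      · rw [if_neg (fun hc : (p : ℕ) = (q : ℕ) ∧ _ => hq (Fin.ext hc.1.symm)), if_neg hq]

lemma smat_eq {j : ℕ} (he : 0 < e) (hj3 : 3 ≤ j) (hjn : j ≤ n) (hk : j - 2 + 1 < n) :
    smat n j = mmat e (gperm (j - 2) hk) (dchg e (j - 2) 0) := by
  ext p q
  simp only [smat, mmat, Matrix.of_apply]
  have h21 : j - 2 + 1 = j - 1 := by omega
  have hv1 : ((⟨j - 2 + 1, hk⟩ : Fin n) : ℕ) = j - 2 + 1 := rfl
  have hv0 : ((⟨j - 2, Nat.lt_of_succ_lt hk⟩ : Fin n) : ℕ) = j - 2 := rfl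
  by_cases hp0 : (p : ℕ) = j - 2
  · rw [gperm_lo hk hp0, dchg_lo _ hp0, neg_zero, zc_zero]
    by_cases hq : (q : ℕ) = j - 1
    · rw [if_pos ⟨hp0, hq⟩, if_pos (Fin.ext (show (q : ℕ) = j - 2 + 1 by omega))]
    · rw [if_neg (fun hc : _ ∧ (q : ℕ) = j - 1 => hq hc.2), if_neg (by omega),
        if_neg (by omega), if_neg (fun hc : q = ⟨j - 2 + 1, hk⟩ => hq (by rw [hc, hv1]; omega))]
  · rw [if_neg (fun hc : (p : ℕ) = j - 2 ∧ _ => hp0 hc.1)]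
    by_cases hp1 : (p : ℕ) = j - 1
    · rw [gperm_hi hk (by omega), dchg_hi _ (by omega), zc_zero]
      by_cases hq : (q : ℕ) = j - 2
      · rw [if_pos ⟨hp1, hq⟩, if_pos (Fin.ext hq : q = ⟨j - 2, Nat.lt_of_succ_lt hk⟩)]
      · rw [if_neg (fun hc : _ ∧ (q : ℕ) = j - 2 => hq hc.2), if_neg (by omega),
          if_neg (fun hc : q = ⟨j - 2, Nat.lt_of_succ_lt hk⟩ => hq (by rw [hc]))]
    · rw [gperm_out hk hp0 (by omega), dchg_out _ hp0 (by omega),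
        if_neg (fun hc : (p : ℕ) = j - 1 ∧ _ => hp1 hc.1), zc_zero]
      by_cases hq : q = p
      · rw [if_pos ⟨(by rw [hq]), hp0, hp1⟩, if_pos hq]
      · rw [if_neg (fun hc : (p : ℕ) = (q : ℕ) ∧ _ => hq (Fin.ext hc.1.symm)), if_neg hq]

lemma genSet_iff (he : 0 < e) (hn : 2 ≤ n) (M : Matrix (Fin n) (Fin n) ℂ) :
    M ∈ genSet e n ↔ ∃ π d, GenD e n π d ∧ M = mmat e π d := by
  haveI : NeZero e := ⟨he.ne'⟩
  constructor
  · rintro (⟨i0, hi0, rfl⟩ | ⟨j, hj3, hjn, rfl⟩)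
    · exact ⟨_, _, ⟨0, (i0 : ZMod e), (by omega : 0 + 1 < n), Or.inl rfl, rfl, rfl⟩,
        tmat_eq he hn i0 (by omega)⟩
    · exact ⟨_, _, ⟨j - 2, 0, (by omega : j - 2 + 1 < n), Or.inr rfl, rfl, rfl⟩,
        smat_eq he hj3 hjn (by omega)⟩
  · rintro ⟨π, d, ⟨k, i, hk, hki, rfl, rfl⟩, rfl⟩
    by_cases hk0 : k = 0
    · subst hk0
      left
      refine ⟨i.val, i.val_lt, ?_⟩
      have h2 := tmat_eq (n := n) he hn i.val hk
      rw [ZMod.natCast_val, ZMod.cast_id] at h2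
      exact h2.symm
    · have hi : i = 0 := hki.resolve_left hk0
      subst hi
      right
      refine ⟨k + 2, by omega, by omega, ?_⟩
      have h2 := smat_eq (e := e) (j := k + 2) (n := n) he (by omega) (by omega)
        (by simpa using hk)
      simp only [show k + 2 - 2 = k from rfl] at h2
      exact h2.symm

lemma dchg_sum {k : ℕ} (hk : k + 1 < n) (i : ZMod e) : ∑ p : Fin n, dchg e k i p = 0 := by
  have key : ∀ p : Fin n, dchg e k i p =
      (if p = (⟨k, Nat.lt_of_succ_lt hk⟩ : Fin n) then -i else 0) +
      (if p = (⟨k + 1, hk⟩ : Fin n) then i else 0) := by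
    intro p
    by_cases h1 : (p : ℕ) = k
    · rw [dchg_lo _ h1, if_pos (Fin.ext h1), if_neg (fun hc => by rw [hc] at h1; simp at h1),
        add_zero]
    · rw [if_neg (fun hc => h1 (by rw [hc])), zero_add]
      by_cases h2 : (p : ℕ) = k + 1
      · rw [dchg_hi _ h2, if_pos (Fin.ext h2)]
      · rw [dchg_out _ h1 h2, if_neg (fun hc => h2 (by rw [hc]))]
  rw [Finset.sum_congr rfl (fun p _ => key p), Finset.sum_add_distrib,
    Finset.sum_ite_eq' Finset.univ _ (fun _ => -i), Finset.sum_ite_eq' Finset.univ _ (fun _ => i)]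
  simp

lemma genD_inv (he : 0 < e) {π : Equiv.Perm (Fin n)} {d : Fin n → ZMod e}
    (h : GenD e n π d) : mmat e π d * mmat e π d = 1 := by
  obtain ⟨k, i, hk, -, rfl, rfl⟩ := h
  rw [mmat_mul he]
  have h1 : (gperm k hk).trans (gperm k hk) = 1 := by
    ext p; simp [gperm, Equiv.swap_apply_self]
  have h2 : (fun p => dchg e k i p + dchg e k i (gperm k hk p)) = (0 : Fin n → ZMod e) := by
    funext p
    by_cases hp1 : (p : ℕ) = k
    · rw [dchg_lo _ hp1, gperm_lo hk hp1, dchg_hi (p := (⟨k + 1, hk⟩ : Fin n)) (k := k) i rfl]; simp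
    · by_cases hp2 : (p : ℕ) = k + 1
      · rw [dchg_hi _ hp2, gperm_hi hk hp2, dchg_lo (p := (⟨k, Nat.lt_of_succ_lt hk⟩ : Fin n)) (k := k) i rfl]; simp
      · rw [dchg_out _ hp1 hp2, gperm_out hk hp1 hp2, dchg_out _ hp1 hp2]; simp
  rw [h1, h2, mmat_one he]

lemma isGeen_iff (he : 0 < e) (w : Matrix (Fin n) (Fin n) ℂ) :
    IsGeen e n w ↔ ∃ (π : Equiv.Perm (Fin n)) (c : Fin n → ZMod e),
      (∑ p, c p) = 0 ∧ w = mmat e π c := by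
  haveI : NeZero e := ⟨he.ne'⟩
  constructor
  · rintro ⟨hrow, hcol, hpow, hprod⟩
    have H : ∀ p, ∃ j, w p j ≠ 0 ∧ ∀ j', w p j' ≠ 0 → j' = j := by
      intro p; obtain ⟨j, hj, hj'⟩ := hrow p; exact ⟨j, hj, hj'⟩
    choose g hg1 hg2 using H
    have hginj : Function.Injective g := by
      intro p p' hpp
      obtain ⟨i, -, hi⟩ := hcol (g p)
      rw [hi p (hg1 p), hi p' (hpp ▸ hg1 p')]
    have hgbij := Finite.injective_iff_bijective.mp hginj
    set π := Equiv.ofBijective g hgbij with hπ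
    have hπg : ∀ p, π p = g p := fun p => rfl
    have HC : ∀ p, ∃ x : ZMod e, zc e x = w p (g p) := by
      intro p
      obtain ⟨k, hk, hzk⟩ := (zeta_prim he).eq_pow_of_pow_eq_one (hpow p (g p) (hg1 p))
      exact ⟨(k : ZMod e), by rw [zc_natCast he, hzk]⟩
    choose c hc using HC
    have hw : w = mmat e π c := by
      ext p q
      simp only [mmat, Matrix.of_apply, hπg]
      by_cases h : q = g p
      · rw [if_pos h, h, hc]
      · rw [if_neg h]
        by_contra hne
        exact h (hg2 p q hne)
    refine ⟨π, c, ?_, hw⟩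
    rw [hw] at hprod
    have hrs : ∀ p : Fin n, ∑ q, mmat e π c p q = zc e (c p) := mmat_row_sum he π c
    rw [Finset.prod_congr rfl (fun p _ => hrs p), zc_sum he] at hprod
    exact (zc_eq_one_iff he _).mp hprod
  · rintro ⟨π, c, hsum, rfl⟩
    refine ⟨?_, ?_, ?_, ?_⟩
    · intro p
      refine ⟨π p, by simp [mmat, zc_ne_zero he], ?_⟩
      intro j hj
      by_contra h
      exact hj (by simp [mmat, h])
    · intro q
      refine ⟨π.symm q, by simp [mmat, zc_ne_zero he], ?_⟩
      intro p hp
      simp only [mmat, Matrix.of_apply, ne_eq, ite_eq_right_iff, not_forall] at hp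
      obtain ⟨h, -⟩ := hp
      rw [h, Equiv.symm_apply_apply]
    · intro p q h
      simp only [mmat, Matrix.of_apply, ne_eq, ite_eq_right_iff, not_forall] at h
      obtain ⟨h1, -⟩ := h
      subst h1
      simp only [mmat, Matrix.of_apply, if_pos rfl]
      exact zc_pow_e he _
    · rw [Finset.prod_congr rfl (fun p _ => mmat_row_sum he π c p), zc_sum he, hsum, zc_zero]

end Aux

namespace Aux

variable {e n : ℕ}

def inb (π : Equiv.Perm (Fin n)) (v : Fin n) : ℕ :=
  (Finset.univ.filter fun u => u < v ∧ π v < π u).card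

def blw (π : Equiv.Perm (Fin n)) (v : Fin n) : ℕ :=
  (Finset.univ.filter fun u => u < v ∧ π u < π v).card

def trm (c : Fin n → ZMod e) (π : Equiv.Perm (Fin n)) (v : Fin n) : ℕ :=
  inb π v + (if c v ≠ 0 then 2 * blw π v else 0)

def phi (π : Equiv.Perm (Fin n)) (c : Fin n → ZMod e) : ℕ := ∑ v, trm c π v

lemma inb_add_blw (π : Equiv.Perm (Fin n)) (v : Fin n) :
    inb π v + blw π v = v.val := by
  rw [inb, blw, ← Finset.card_union_of_disjoint, ← Finset.filter_or]
  · rw [show (Finset.univ.filter fun u => (u < v ∧ π v < π u) ∨ (u < v ∧ π u < π v))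
        = Finset.Iio v by
      ext u
      simp only [Finset.mem_filter, Finset.mem_univ, true_and, Finset.mem_Iio]
      constructor
      · rintro (⟨h, -⟩ | ⟨h, -⟩) <;> exact h
      · intro h
        have hne : π u ≠ π v := fun hc => absurd (π.injective hc) (ne_of_lt h)
        rcases lt_or_gt_of_ne hne with h2 | h2
        · exact Or.inr ⟨h, h2⟩
        · exact Or.inl ⟨h, h2⟩, Fin.card_Iio]
  · rw [Finset.disjoint_filter]
    rintro u - ⟨-, h1⟩ ⟨-, h2⟩
    exact absurd (h1.trans h2) (lt_irrefl _)

lemma trm_le (c : Fin n → ZMod e) (π : Equiv.Perm (Fin n)) (v : Fin n) :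
    trm c π v ≤ 2 * v.val := by
  have h := inb_add_blw π v
  rw [trm]
  split_ifs <;> omega

lemma sum_two_val : ∑ v : Fin n, 2 * (v : ℕ) = n * (n - 1) := by
  rw [Fin.sum_univ_eq_sum_range (fun i => 2 * i) n]
  have := Finset.sum_range_id_mul_two n
  calc ∑ i ∈ Finset.range n, 2 * i = (∑ i ∈ Finset.range n, i) * 2 := by
        rw [Finset.sum_mul]; exact Finset.sum_congr rfl fun i _ => by ring
    _ = n * (n - 1) := Finset.sum_range_id_mul_two n

lemma phi_le (π : Equiv.Perm (Fin n)) (c : Fin n → ZMod e) : phi π c ≤ n * (n - 1) := by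
  rw [phi, ← sum_two_val]
  exact Finset.sum_le_sum fun v _ => trm_le c π v

lemma perm_eq_one_of_no_inb {π : Equiv.Perm (Fin n)} (h : ∀ v, inb π v = 0) : π = 1 := by
  have hmono : StrictMono π := by
    intro u v huv
    have hne : π u ≠ π v := fun hc => absurd (π.injective hc) (ne_of_lt huv)
    rcases lt_or_gt_of_ne hne with h2 | h2
    · exact h2
    · exfalso
      have : u ∈ Finset.univ.filter fun u => u < v ∧ π v < π u :=
        Finset.mem_filter.mpr ⟨Finset.mem_univ _, huv, h2⟩
      have := Finset.card_pos.mpr ⟨u, this⟩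
      rw [show (Finset.univ.filter fun u => u < v ∧ π v < π u).card = inb π v from rfl,
        h v] at this
      exact absurd this (lt_irrefl 0)
  have hmono' : StrictMono π.symm := by
    intro u v huv
    rcases lt_trichotomy (π.symm u) (π.symm v) with h2 | h2 | h2
    · exact h2
    · exact absurd (by rw [← π.apply_symm_apply u, ← π.apply_symm_apply v, h2]) (ne_of_lt huv)
    · have := hmono h2
      rw [π.apply_symm_apply, π.apply_symm_apply] at this
      exact absurd (this.trans huv) (lt_irrefl _)
  ext v
  haveI : WellFoundedLT (Fin n) := Finite.to_wellFoundedLT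
  have h1 : v ≤ π v := hmono.le_apply (x := v)
  have h2 : v ≤ π.symm v := hmono'.le_apply (x := v)
  have h3 : π v ≤ v := by
    have := hmono.le_iff_le.mpr h2
    rwa [π.apply_symm_apply] at this
  exact Fin.ext_iff.mp (le_antisymm h3 h1)

lemma inb_one (v : Fin n) : inb (1 : Equiv.Perm (Fin n)) v = 0 := by
  rw [inb, Finset.card_eq_zero, Finset.filter_eq_empty_iff]
  rintro u -
  simp only [Equiv.Perm.coe_one, id_eq]
  rintro ⟨h1, h2⟩
  exact absurd (h1.trans h2) (lt_irrefl _)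

lemma blw_one (v : Fin n) : blw (1 : Equiv.Perm (Fin n)) v = v.val := by
  have h := inb_add_blw (1 : Equiv.Perm (Fin n)) v
  rw [inb_one] at h
  omega

lemma phi_one_zero : phi (1 : Equiv.Perm (Fin n)) (0 : Fin n → ZMod e) = 0 := by
  rw [phi]
  refine Finset.sum_eq_zero fun v _ => ?_
  simp [trm, inb_one]

lemma phi_eq_max_iff (π : Equiv.Perm (Fin n)) (c : Fin n → ZMod e) :
    phi π c = n * (n - 1) ↔ (π = 1 ∧ ∀ v : Fin n, 1 ≤ (v : ℕ) → c v ≠ 0) := by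
  constructor
  · intro h
    have hterm : ∀ v : Fin n, trm c π v = 2 * (v : ℕ) := by
      by_contra hc
      push_neg at hc
      obtain ⟨v0, hv0⟩ := hc
      have hlt : trm c π v0 < 2 * (v0 : ℕ) := lt_of_le_of_ne (trm_le c π v0) hv0
      have : phi π c < ∑ v : Fin n, 2 * (v : ℕ) :=
        Finset.sum_lt_sum (fun v _ => trm_le c π v) ⟨v0, Finset.mem_univ _, hlt⟩
      rw [sum_two_val, h] at this
      exact absurd this (lt_irrefl _)
    have hinb : ∀ v, inb π v = 0 := by
      intro v
      have h1 := hterm v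
      have h2 := inb_add_blw π v
      rw [trm] at h1
      rcases Nat.eq_zero_or_pos (v : ℕ) with hv | hv
      · omega
      · split_ifs at h1 <;> omega
    refine ⟨perm_eq_one_of_no_inb hinb, fun v hv => ?_⟩
    have h1 := hterm v
    have h2 := inb_add_blw π v
    rw [trm] at h1
    split_ifs at h1 with hch
    · exact hch
    · omega
  · rintro ⟨rfl, hc⟩
    rw [phi, ← sum_two_val]
    refine Finset.sum_congr rfl fun v _ => ?_
    rw [trm, inb_one, blw_one, zero_add]
    rcases Nat.eq_zero_or_pos (v : ℕ) with hv | hv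
    · rw [hv]; split_ifs <;> rfl
    · rw [if_pos (hc v hv)]

end Aux

namespace Aux

variable {e n : ℕ}

def pA {n : ℕ} {k : ℕ} (hk : k + 1 < n) : Fin n := ⟨k, Nat.lt_of_succ_lt hk⟩
def pB {n : ℕ} {k : ℕ} (hk : k + 1 < n) : Fin n := ⟨k + 1, hk⟩

lemma pA_val {k : ℕ} (hk : k + 1 < n) : ((pA hk : Fin n) : ℕ) = k := rfl
lemma pB_val {k : ℕ} (hk : k + 1 < n) : ((pB hk : Fin n) : ℕ) = k + 1 := rfl

lemma pA_lt_pB {k : ℕ} (hk : k + 1 < n) : pA hk < pB hk := by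
  rw [Fin.lt_iff_val_lt_val, pA_val, pB_val]; omega

lemma pA_ne_pB {k : ℕ} (hk : k + 1 < n) : pA hk ≠ pB hk := ne_of_lt (pA_lt_pB hk)

lemma gperm_pA {k : ℕ} (hk : k + 1 < n) : gperm k hk (pA hk) = pB hk := gperm_lo hk rfl
lemma gperm_pB {k : ℕ} (hk : k + 1 < n) : gperm k hk (pB hk) = pA hk := gperm_hi hk rfl

lemma gperm_ne {k : ℕ} (hk : k + 1 < n) {z : Fin n} (h1 : z ≠ pA hk) (h2 : z ≠ pB hk) :
    gperm k hk z = z :=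
  gperm_out hk (fun hc => h1 (Fin.ext hc)) (fun hc => h2 (Fin.ext hc))

lemma R_lt_right {k : ℕ} (hk : k + 1 < n) {z : Fin n} (h1 : z ≠ pA hk) (h2 : z ≠ pB hk)
    (w : Fin n) : z < gperm k hk w ↔ z < w := by
  have hz1 : (z : ℕ) ≠ k := fun hc => h1 (Fin.ext hc)
  have hz2 : (z : ℕ) ≠ k + 1 := fun hc => h2 (Fin.ext hc)
  rw [Fin.lt_iff_val_lt_val, Fin.lt_iff_val_lt_val, gperm_val hk w]
  split_ifs <;> omega

lemma R_lt_left {k : ℕ} (hk : k + 1 < n) {z : Fin n} (h1 : z ≠ pA hk) (h2 : z ≠ pB hk)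
    (w : Fin n) : gperm k hk w < z ↔ w < z := by
  have hz1 : (z : ℕ) ≠ k := fun hc => h1 (Fin.ext hc)
  have hz2 : (z : ℕ) ≠ k + 1 := fun hc => h2 (Fin.ext hc)
  rw [Fin.lt_iff_val_lt_val, Fin.lt_iff_val_lt_val, gperm_val hk w]
  split_ifs <;> omega

section Move

variable {k : ℕ} (π : Equiv.Perm (Fin n)) (c : Fin n → ZMod e) (i : ZMod e) (hk : k + 1 < n)

/-- the token not at the swap positions keeps its term -/
lemma move_term_other (v : Fin n) (hvx : π v ≠ pA hk) (hvy : π v ≠ pB hk) :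
    trm (fun p => c p + dchg e k i (π p)) (π.trans (gperm k hk)) v = trm c π v := by
  have hgv : (π.trans (gperm k hk)) v = π v := by
    simp only [Equiv.trans_apply]; exact gperm_ne hk hvx hvy
  have hc' : c v + dchg e k i (π v) = c v := by
    rw [dchg_out _ (show ((π v : Fin n) : ℕ) ≠ k from fun hc => hvx (Fin.ext hc))
      (show ((π v : Fin n) : ℕ) ≠ k + 1 from fun hc => hvy (Fin.ext hc)), add_zero]
  rw [trm, trm, hc']
  have hinb : inb (π.trans (gperm k hk)) v = inb π v := by
    rw [inb, inb]
    refine congrArg Finset.card (Finset.filter_congr fun u _ => ?_)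
    rw [hgv]
    simp only [Equiv.trans_apply]
    exact and_congr Iff.rfl (R_lt_right hk hvx hvy (π u))
  have hblw : blw (π.trans (gperm k hk)) v = blw π v := by
    rw [blw, blw]
    refine congrArg Finset.card (Finset.filter_congr fun u _ => ?_)
    rw [hgv]
    simp only [Equiv.trans_apply]
    exact and_congr Iff.rfl (R_lt_left hk hvx hvy (π u))
  rw [hinb, hblw]

lemma card_filter_split (P : Fin n → Prop) [DecidablePred P] (u0 : Fin n) :
    (Finset.univ.filter P).card
      = ((Finset.univ.erase u0).filter P).card + if P u0 then 1 else 0 := by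
  conv_lhs => rw [← Finset.insert_erase (Finset.mem_univ u0)]
  rw [Finset.filter_insert]
  split_ifs with h
  · rw [Finset.card_insert_of_notMem, add_comm]
    intro hc
    exact absurd (Finset.mem_of_mem_filter _ hc) (Finset.notMem_erase u0 _)
  · rw [add_zero]

/-- decomposition of the term at `v0` (one of the two swapped tokens),
    relative to the other swapped token `u0 < v0`. -/
lemma trm_v0_formula (u0 v0 : Fin n) (hlt : u0 < v0)
    (hu0 : π u0 = pA hk ∨ π u0 = pB hk) (hv0 : π v0 = pA hk ∨ π v0 = pB hk)
    (hne : π u0 ≠ π v0) :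
    trm c π v0 = ((Finset.univ.erase u0).filter fun u => u < v0 ∧ π v0 < π u).card
      + (if π v0 < π u0 then 1 else 0)
      + (if c v0 ≠ 0 then
          2 * ((Finset.univ.erase u0).filter fun u => u < v0 ∧ π u < π v0).card
          + (if π u0 < π v0 then 2 else 0) else 0) := by
  rw [trm, inb, blw, card_filter_split _ u0, card_filter_split _ u0]
  have h1 : ((if u0 < v0 ∧ π v0 < π u0 then 1 else 0) : ℕ) = if π v0 < π u0 then 1 else 0 := by
    by_cases hb : π v0 < π u0
    · rw [if_pos ⟨hlt, hb⟩, if_pos hb]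
    · rw [if_neg (fun hc => hb hc.2), if_neg hb]
  have h2 : ((if u0 < v0 ∧ π u0 < π v0 then 1 else 0) : ℕ) = if π u0 < π v0 then 1 else 0 := by
    by_cases hb : π u0 < π v0
    · rw [if_pos ⟨hlt, hb⟩, if_pos hb]
    · rw [if_neg (fun hc => hb hc.2), if_neg hb]
  rw [h1, h2]
  split_ifs <;> omega

end Move

end Aux

namespace Aux

variable {e n : ℕ}

section Move2

variable {k : ℕ} (π : Equiv.Perm (Fin n)) (c : Fin n → ZMod e) (i : ZMod e) (hk : k + 1 < n)

lemma pos_ne_of_ne_tokens {u u0 v0 : Fin n} (hu0 : π u0 = pA hk ∨ π u0 = pB hk)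
    (hv0 : π v0 = pA hk ∨ π v0 = pB hk) (hne : π u0 ≠ π v0)
    (h1 : u ≠ u0) (h2 : u ≠ v0) : π u ≠ pA hk ∧ π u ≠ pB hk := by
  constructor
  · intro hc
    rcases hu0 with h | h
    · exact h1 (π.injective (hc.trans h.symm))
    · rcases hv0 with h' | h'
      · exact h2 (π.injective (hc.trans h'.symm))
      · exact hne (h.trans (h'.symm))
  · intro hc
    rcases hu0 with h | h
    · rcases hv0 with h' | h'
      · exact hne (h.trans (h'.symm))
      · exact h2 (π.injective (hc.trans h'.symm))
    · exact h1 (π.injective (hc.trans h.symm))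

lemma K_eq (u0 v0 : Fin n) (hu0 : π u0 = pA hk ∨ π u0 = pB hk)
    (hv0 : π v0 = pA hk ∨ π v0 = pB hk) (hne : π u0 ≠ π v0) :
    ((Finset.univ.erase u0).filter fun u => u < v0 ∧
        (π.trans (gperm k hk)) v0 < (π.trans (gperm k hk)) u).card
      = ((Finset.univ.erase u0).filter fun u => u < v0 ∧ π v0 < π u).card := by
  refine congrArg Finset.card (Finset.filter_congr fun u hu => ?_)
  have hu1 : u ≠ u0 := Finset.ne_of_mem_erase hu
  refine and_congr_right fun hultv0 => ?_
  have hu2 : u ≠ v0 := ne_of_lt hultv0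
  obtain ⟨ha, hb⟩ := pos_ne_of_ne_tokens π hk hu0 hv0 hne hu1 hu2
  simp only [Equiv.trans_apply]
  rw [gperm_ne hk ha hb]
  exact R_lt_left hk ha hb (π v0)

lemma B_eq (u0 v0 : Fin n) (hu0 : π u0 = pA hk ∨ π u0 = pB hk)
    (hv0 : π v0 = pA hk ∨ π v0 = pB hk) (hne : π u0 ≠ π v0) :
    ((Finset.univ.erase u0).filter fun u => u < v0 ∧
        (π.trans (gperm k hk)) u < (π.trans (gperm k hk)) v0).card
      = ((Finset.univ.erase u0).filter fun u => u < v0 ∧ π u < π v0).card := by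
  refine congrArg Finset.card (Finset.filter_congr fun u hu => ?_)
  have hu1 : u ≠ u0 := Finset.ne_of_mem_erase hu
  refine and_congr_right fun hultv0 => ?_
  have hu2 : u ≠ v0 := ne_of_lt hultv0
  obtain ⟨ha, hb⟩ := pos_ne_of_ne_tokens π hk hu0 hv0 hne hu1 hu2
  simp only [Equiv.trans_apply]
  rw [gperm_ne hk ha hb]
  exact R_lt_right hk ha hb (π v0)

lemma B_zero_of_k0 (hk0 : k = 0) (u0 v0 : Fin n)
    (hu0 : π u0 = pA hk ∨ π u0 = pB hk) (hv0 : π v0 = pA hk ∨ π v0 = pB hk)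
    (hne : π u0 ≠ π v0) :
    ((Finset.univ.erase u0).filter fun u => u < v0 ∧ π u < π v0).card = 0 := by
  rw [Finset.card_eq_zero, Finset.filter_eq_empty_iff]
  intro u hu
  rintro ⟨h1, h2⟩
  have hu1 : u ≠ u0 := Finset.ne_of_mem_erase hu
  have hu2 : u ≠ v0 := ne_of_lt h1
  obtain ⟨ha, hb⟩ := pos_ne_of_ne_tokens π hk hu0 hv0 hne hu1 hu2
  have hva : (π u : ℕ) ≠ k := fun hc => ha (Fin.ext hc)
  have hvb : (π u : ℕ) ≠ k + 1 := fun hc => hb (Fin.ext hc)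
  have hv0v : (π v0 : ℕ) ≤ k + 1 := by
    rcases hv0 with h | h <;> rw [h]
    · rw [pA_val]; omega
    · rw [pB_val]
  rw [Fin.lt_iff_val_lt_val] at h2
  omega

/-- the term of the smaller swapped token is unchanged -/
lemma trm_u0_eq (u0 v0 : Fin n) (hlt : u0 < v0)
    (hu0 : π u0 = pA hk ∨ π u0 = pB hk) (hv0 : π v0 = pA hk ∨ π v0 = pB hk)
    (hne : π u0 ≠ π v0) (hki : k = 0 ∨ i = 0) :
    trm (fun p => c p + dchg e k i (π p)) (π.trans (gperm k hk)) u0 = trm c π u0 := by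
  have hother : ∀ u, u < u0 → π u ≠ pA hk ∧ π u ≠ pB hk := fun u hu =>
    pos_ne_of_ne_tokens π hk hu0 hv0 hne (ne_of_lt hu) (ne_of_lt (hu.trans hlt))
  have hinb : inb (π.trans (gperm k hk)) u0 = inb π u0 := by
    rw [inb, inb]
    refine congrArg Finset.card (Finset.filter_congr fun u _ => ?_)
    refine and_congr_right fun hu => ?_
    obtain ⟨ha, hb⟩ := hother u hu
    simp only [Equiv.trans_apply]
    rw [gperm_ne hk ha hb]
    exact R_lt_left hk ha hb (π u0)
  have hblw : blw (π.trans (gperm k hk)) u0 = blw π u0 := by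
    rw [blw, blw]
    refine congrArg Finset.card (Finset.filter_congr fun u _ => ?_)
    refine and_congr_right fun hu => ?_
    obtain ⟨ha, hb⟩ := hother u hu
    simp only [Equiv.trans_apply]
    rw [gperm_ne hk ha hb]
    exact R_lt_right hk ha hb (π u0)
  rcases hki with hk0 | hi0
  · -- k = 0 : blw u0 = 0 so charge is irrelevant
    have hblw0 : blw π u0 = 0 := by
      rw [blw, Finset.card_eq_zero, Finset.filter_eq_empty_iff]
      intro u _
      rintro ⟨h1, h2⟩
      obtain ⟨ha, hb⟩ := hother u h1
      have hva : (π u : ℕ) ≠ k := fun hc => ha (Fin.ext hc)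
      have hvb : (π u : ℕ) ≠ k + 1 := fun hc => hb (Fin.ext hc)
      have hu0v : (π u0 : ℕ) ≤ k + 1 := by
        rcases hu0 with h | h <;> rw [h]
        · rw [pA_val]; omega
        · rw [pB_val]
      rw [Fin.lt_iff_val_lt_val] at h2
      omega
    rw [trm, trm, hinb, hblw, hblw0]
    simp
  · -- i = 0 : charge unchanged
    have hcc : c u0 + dchg e k (0 : ZMod e) (π u0) = c u0 := by
      have : ∀ p : Fin n, dchg e k (0 : ZMod e) p = 0 := by
        intro p; rw [dchg]; split_ifs <;> simp
      rw [this, add_zero]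
    rw [trm, trm, hinb, hblw, hi0, hcc]

lemma flip1 (u0 v0 : Fin n)
    (hu0 : π u0 = pA hk ∨ π u0 = pB hk) (hv0 : π v0 = pA hk ∨ π v0 = pB hk)
    (hne : π u0 ≠ π v0) :
    ((π.trans (gperm k hk)) v0 < (π.trans (gperm k hk)) u0 ↔ π u0 < π v0) := by
  simp only [Equiv.trans_apply]
  rcases hu0 with h | h
  · rcases hv0 with h' | h'
    · exact absurd (h.trans h'.symm) hne
    · rw [h, h', gperm_pA, gperm_pB]
  · rcases hv0 with h' | h'
    · rw [h, h', gperm_pA, gperm_pB]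
    · exact absurd (h.trans h'.symm) hne

lemma flip2 (u0 v0 : Fin n)
    (hu0 : π u0 = pA hk ∨ π u0 = pB hk) (hv0 : π v0 = pA hk ∨ π v0 = pB hk)
    (hne : π u0 ≠ π v0) :
    ((π.trans (gperm k hk)) u0 < (π.trans (gperm k hk)) v0 ↔ π v0 < π u0) := by
  simp only [Equiv.trans_apply]
  rcases hu0 with h | h
  · rcases hv0 with h' | h'
    · exact absurd (h.trans h'.symm) hne
    · rw [h, h', gperm_pA, gperm_pB]
  · rcases hv0 with h' | h'
    · rw [h, h', gperm_pA, gperm_pB]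
    · exact absurd (h.trans h'.symm) hne

/-- full formula for the new term of the larger swapped token -/
lemma trm_v0_new (u0 v0 : Fin n) (hlt : u0 < v0)
    (hu0 : π u0 = pA hk ∨ π u0 = pB hk) (hv0 : π v0 = pA hk ∨ π v0 = pB hk)
    (hne : π u0 ≠ π v0) :
    trm (fun p => c p + dchg e k i (π p)) (π.trans (gperm k hk)) v0
      = ((Finset.univ.erase u0).filter fun u => u < v0 ∧ π v0 < π u).card
      + (if π u0 < π v0 then 1 else 0)
      + (if c v0 + dchg e k i (π v0) ≠ 0 then
          2 * ((Finset.univ.erase u0).filter fun u => u < v0 ∧ π u < π v0).card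
          + (if π v0 < π u0 then 2 else 0) else 0) := by
  have hu0' : (π.trans (gperm k hk)) u0 = pA hk ∨ (π.trans (gperm k hk)) u0 = pB hk := by
    simp only [Equiv.trans_apply]
    rcases hu0 with h | h
    · right; rw [h, gperm_pA]
    · left; rw [h, gperm_pB]
  have hv0' : (π.trans (gperm k hk)) v0 = pA hk ∨ (π.trans (gperm k hk)) v0 = pB hk := by
    simp only [Equiv.trans_apply]
    rcases hv0 with h | h
    · right; rw [h, gperm_pA]
    · left; rw [h, gperm_pB]
  have hne' : (π.trans (gperm k hk)) u0 ≠ (π.trans (gperm k hk)) v0 := by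
    intro hcc
    exact hne (π.injective ((gperm k hk).injective
      (by simpa only [Equiv.trans_apply] using hcc) ▸ rfl))
  have h := trm_v0_formula (π.trans (gperm k hk)) (fun p => c p + dchg e k i (π p)) hk
    u0 v0 hlt hu0' hv0' hne'
  rw [h, K_eq π hk u0 v0 hu0 hv0 hne, B_eq π hk u0 v0 hu0 hv0 hne]
  rw [if_congr (flip1 π hk u0 v0 hu0 hv0 hne) rfl rfl,
    if_congr (flip2 π hk u0 v0 hu0 hv0 hne) rfl rfl]

end Move2

end Aux

namespace Aux

variable {e n : ℕ}

lemma phi_split (π : Equiv.Perm (Fin n)) (c : Fin n → ZMod e) {u0 v0 : Fin n} (hne : u0 ≠ v0) :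
    phi π c = trm c π u0 + (trm c π v0 + ∑ v ∈ (Finset.univ.erase u0).erase v0, trm c π v) := by
  rw [phi, ← Finset.add_sum_erase _ _ (Finset.mem_univ u0),
    ← Finset.add_sum_erase _ _ (Finset.mem_erase.mpr ⟨hne.symm, Finset.mem_univ v0⟩)]

section Move3

variable {k : ℕ} (π : Equiv.Perm (Fin n)) (c : Fin n → ZMod e) (i : ZMod e) (hk : k + 1 < n)

lemma sum_others_eq (u0 v0 : Fin n)
    (hu0 : π u0 = pA hk ∨ π u0 = pB hk) (hv0 : π v0 = pA hk ∨ π v0 = pB hk)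
    (hne : π u0 ≠ π v0) :
    ∑ v ∈ (Finset.univ.erase u0).erase v0,
        trm (fun p => c p + dchg e k i (π p)) (π.trans (gperm k hk)) v
      = ∑ v ∈ (Finset.univ.erase u0).erase v0, trm c π v := by
  refine Finset.sum_congr rfl fun v hv => ?_
  have h2 : v ≠ v0 := Finset.ne_of_mem_erase hv
  have h1 : v ≠ u0 := Finset.ne_of_mem_erase (Finset.mem_of_mem_erase hv)
  obtain ⟨ha, hb⟩ := pos_ne_of_ne_tokens π hk hu0 hv0 hne h1 h2
  exact move_term_other π c i hk v ha hb

lemma phi_move_le_aux (u0 v0 : Fin n) (hlt : u0 < v0)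
    (hu0 : π u0 = pA hk ∨ π u0 = pB hk) (hv0 : π v0 = pA hk ∨ π v0 = pB hk)
    (hne : π u0 ≠ π v0) (hki : k = 0 ∨ i = 0) :
    phi (π.trans (gperm k hk)) (fun p => c p + dchg e k i (π p)) ≤ phi π c + 1 := by
  rw [phi_split _ _ (ne_of_lt hlt), phi_split π c (ne_of_lt hlt),
    sum_others_eq π c i hk u0 v0 hu0 hv0 hne,
    trm_u0_eq π c i hk u0 v0 hlt hu0 hv0 hne hki,
    trm_v0_new π c i hk u0 v0 hlt hu0 hv0 hne,
    trm_v0_formula π c hk u0 v0 hlt hu0 hv0 hne]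
  have hexcl : ¬(π u0 < π v0 ∧ π v0 < π u0) := fun ⟨h1, h2⟩ => absurd (h1.trans h2) (lt_irrefl _)
  rcases hki with hk0 | hi0
  · rw [B_zero_of_k0 π hk hk0 u0 v0 hu0 hv0 hne]
    split_ifs <;> first
      | omega
      | exact absurd ⟨‹π u0 < π v0›, ‹π v0 < π u0›⟩ hexcl
  · subst hi0
    have hz : dchg e k (0 : ZMod e) (π v0) = 0 := by
      rw [dchg]; split_ifs <;> simp
    rw [hz, add_zero]
    split_ifs <;> omega

lemma phi_move_dec_S1 (u0 v0 : Fin n) (hlt : u0 < v0)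
    (hu0 : π u0 = pA hk) (hv0 : π v0 = pB hk) (hch : c v0 ≠ 0) :
    phi (π.trans (gperm k hk)) (fun p => c p + dchg e k (0 : ZMod e) (π p)) + 1 ≤ phi π c := by
  have hne : π u0 ≠ π v0 := by rw [hu0, hv0]; exact pA_ne_pB hk
  rw [phi_split _ _ (ne_of_lt hlt), phi_split π c (ne_of_lt hlt),
    sum_others_eq π c 0 hk u0 v0 (Or.inl hu0) (Or.inr hv0) hne,
    trm_u0_eq π c 0 hk u0 v0 hlt (Or.inl hu0) (Or.inr hv0) hne (Or.inr rfl),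
    trm_v0_new π c 0 hk u0 v0 hlt (Or.inl hu0) (Or.inr hv0) hne,
    trm_v0_formula π c hk u0 v0 hlt (Or.inl hu0) (Or.inr hv0) hne]
  have ha : π u0 < π v0 := by rw [hu0, hv0]; exact pA_lt_pB hk
  have hb : ¬(π v0 < π u0) := asymm ha
  have hz : dchg e k (0 : ZMod e) (π v0) = 0 := by
    rw [dchg]; split_ifs <;> simp
  rw [hz, add_zero, if_pos ha, if_neg hb, if_neg hb, if_pos ha, if_pos hch, if_pos hch]
  omega

lemma phi_move_dec_S2 (u0 v0 : Fin n) (hlt : u0 < v0)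
    (hu0 : π u0 = pB hk) (hv0 : π v0 = pA hk)
    (hc0 : c v0 + dchg e k i (π v0) = 0) (hki : k = 0 ∨ i = 0) :
    phi (π.trans (gperm k hk)) (fun p => c p + dchg e k i (π p)) + 1 ≤ phi π c := by
  have hne : π u0 ≠ π v0 := by rw [hu0, hv0]; exact (pA_ne_pB hk).symm
  rw [phi_split _ _ (ne_of_lt hlt), phi_split π c (ne_of_lt hlt),
    sum_others_eq π c i hk u0 v0 (Or.inr hu0) (Or.inl hv0) hne,
    trm_u0_eq π c i hk u0 v0 hlt (Or.inr hu0) (Or.inl hv0) hne hki,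
    trm_v0_new π c i hk u0 v0 hlt (Or.inr hu0) (Or.inl hv0) hne,
    trm_v0_formula π c hk u0 v0 hlt (Or.inr hu0) (Or.inl hv0) hne]
  have hb : π v0 < π u0 := by rw [hu0, hv0]; exact pA_lt_pB hk
  have ha : ¬(π u0 < π v0) := asymm hb
  rw [if_pos hb, if_neg ha, if_neg ha, if_pos hb, if_neg (fun h => h hc0)]
  split_ifs <;> omega

end Move3

/-- any generator changes `phi` by at most one -/
lemma phi_move_le {γ : Equiv.Perm (Fin n)} {d : Fin n → ZMod e} (hG : GenD e n γ d)
    (π : Equiv.Perm (Fin n)) (c : Fin n → ZMod e) :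
    phi (π.trans γ) (fun p => c p + d (π p)) ≤ phi π c + 1 := by
  obtain ⟨k, i, hk, hki, rfl, rfl⟩ := hG
  set x := π.symm (pA hk) with hx
  set y := π.symm (pB hk) with hy
  have hπx : π x = pA hk := π.apply_symm_apply _
  have hπy : π y = pB hk := π.apply_symm_apply _
  have hne : π x ≠ π y := by rw [hπx, hπy]; exact pA_ne_pB hk
  rcases lt_trichotomy x y with h | h | h
  · exact phi_move_le_aux π c i hk x y h (Or.inl hπx) (Or.inr hπy) hne hki
  · exact absurd (congrArg π h) hne
  · exact phi_move_le_aux π c i hk y x h (Or.inr hπy) (Or.inl hπx)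
      (by rw [hπx, hπy]; exact (pA_ne_pB hk).symm) hki

lemma perm_eq_one_of_strictMono {π : Equiv.Perm (Fin n)} (hmono : StrictMono ⇑π) : π = 1 := by
  have hmono' : StrictMono ⇑π.symm := by
    intro u v huv
    rcases lt_trichotomy (π.symm u) (π.symm v) with h2 | h2 | h2
    · exact h2
    · exact absurd (by rw [← π.apply_symm_apply u, ← π.apply_symm_apply v, h2]) (ne_of_lt huv)
    · have := hmono h2
      rw [π.apply_symm_apply, π.apply_symm_apply] at this
      exact absurd (this.trans huv) (lt_irrefl _)
  ext v
  haveI : WellFoundedLT (Fin n) := Finite.to_wellFoundedLT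
  have h1 : v ≤ π v := hmono.le_apply (x := v)
  have h2 : v ≤ π.symm v := hmono'.le_apply (x := v)
  have h3 : π v ≤ v := by
    have := hmono.le_iff_le.mpr h2
    rwa [π.apply_symm_apply] at this
  exact Fin.ext_iff.mp (le_antisymm h3 h1)

lemma exists_adj_inv {π : Equiv.Perm (Fin n)} (hπ : π ≠ 1) :
    ∃ (k : ℕ) (hk : k + 1 < n), π.symm (pB hk) < π.symm (pA hk) := by
  by_contra h
  push_neg at h
  have hadj : ∀ (k : ℕ) (hk : k + 1 < n), π.symm (pA hk) < π.symm (pB hk) := by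
    intro k hk
    refine lt_of_le_of_ne (h k hk) ?_
    intro hc
    exact absurd (π.symm.injective hc) (pA_ne_pB hk)
  have step : ∀ (m : ℕ) (a b : Fin n), (b : ℕ) = (a : ℕ) + m + 1 → π.symm a < π.symm b := by
    intro m
    induction m with
    | zero =>
      intro a b hab
      have hk : (a : ℕ) + 1 < n := by have := b.isLt; omega
      have ha : a = pA hk := Fin.ext rfl
      have hb : b = pB hk := Fin.ext hab
      rw [ha, hb]; exact hadj _ hk
    | succ m ih =>
      intro a b hab
      have hmid : (a : ℕ) + m + 1 < n := by have := b.isLt; omega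
      have h1 : π.symm a < π.symm (⟨(a : ℕ) + m + 1, hmid⟩ : Fin n) := ih a _ rfl
      have hk2 : ((a : ℕ) + m + 1) + 1 < n := by have := b.isLt; omega
      have h2 : π.symm (⟨(a : ℕ) + m + 1, hmid⟩ : Fin n) < π.symm b := by
        have hA : (⟨(a : ℕ) + m + 1, hmid⟩ : Fin n) = pA hk2 := Fin.ext rfl
        have hB : b = pB hk2 := Fin.ext (by rw [pB_val]; omega)
        rw [hA, hB]; exact hadj _ hk2
      exact h1.trans h2
  have hmono : StrictMono ⇑π.symm := by
    intro a b hab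
    rw [Fin.lt_iff_val_lt_val] at hab
    exact step ((b : ℕ) - (a : ℕ) - 1) a b (by omega)
  have := perm_eq_one_of_strictMono hmono
  apply hπ
  have h2 := congrArg Equiv.symm this
  rwa [Equiv.symm_symm, show (1 : Equiv.Perm (Fin n)).symm = 1 from rfl] at h2

lemma exists_snd_charged {c : Fin n → ZMod e} (hsum : ∑ p, c p = 0) {v : Fin n}
    (hv : c v ≠ 0) : ∃ v', v' ≠ v ∧ c v' ≠ 0 := by
  by_contra h
  push_neg at h
  have : ∑ p, c p = c v :=
    Finset.sum_eq_single v (fun b _ hb => h b hb) (fun hc => absurd (Finset.mem_univ v) hc)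
  rw [hsum] at this
  exact hv this.symm

lemma dchg_zero_i {k : ℕ} (p : Fin n) : dchg e k (0 : ZMod e) p = (0 : ZMod e) := by
  rw [dchg]; split_ifs <;> simp

/-- KeyLemma2 : any nontrivial element admits a `phi`-decreasing generator move -/
lemma exists_dec (π : Equiv.Perm (Fin n)) (c : Fin n → ZMod e)
    (hsum : ∑ p, c p = 0) (hne : ¬(π = 1 ∧ c = 0)) :
    ∃ (k : ℕ) (i : ZMod e) (hk : k + 1 < n), (k = 0 ∨ i = 0) ∧
      phi (π.trans (gperm k hk)) (fun p => c p + dchg e k i (π p)) < phi π c := by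
  by_cases hc : c = 0
  · -- no charges : use an adjacent inversion
    have hπ : π ≠ 1 := fun h => hne ⟨h, hc⟩
    obtain ⟨k, hk, hinv⟩ := exists_adj_inv hπ
    set u0 := π.symm (pB hk)
    set v0 := π.symm (pA hk)
    refine ⟨k, 0, hk, Or.inr rfl, ?_⟩
    have hd := phi_move_dec_S2 π c 0 hk u0 v0 hinv (π.apply_symm_apply _)
      (π.apply_symm_apply _) (by rw [hc, dchg_zero_i]; simp) (Or.inr rfl)
    omega
  · -- some charge : find the leftmost charged token away from position 0
    have hex : ∃ z : Fin n, c z ≠ 0 ∧ (π z : ℕ) ≠ 0 := by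
      obtain ⟨v, hv⟩ : ∃ v, c v ≠ 0 := by
        by_contra h; push_neg at h; exact hc (funext h)
      by_cases hπv : (π v : ℕ) = 0
      · obtain ⟨v', hv'ne, hv'⟩ := exists_snd_charged hsum hv
        refine ⟨v', hv', ?_⟩
        intro hc2
        exact hv'ne (π.injective (Fin.ext (hc2.trans hπv.symm)))
      · exact ⟨v, hv, hπv⟩
    set S := Finset.univ.filter (fun z => c z ≠ 0 ∧ (π z : ℕ) ≠ 0) with hS
    have hSne : S.Nonempty := by
      obtain ⟨z, hz1, hz2⟩ := hex
      exact ⟨z, Finset.mem_filter.mpr ⟨Finset.mem_univ _, hz1, hz2⟩⟩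
    obtain ⟨z, hzS, hzmin⟩ := Finset.exists_min_image S (fun z => ((π z : Fin n) : ℕ)) hSne
    obtain ⟨-, hzc, hzpos⟩ := Finset.mem_filter.mp hzS
    set P : ℕ := (π z : ℕ) with hP
    have hP1 : 1 ≤ P := by omega
    have hPn : P < n := (π z).isLt
    have hk : (P - 1) + 1 < n := by omega
    have hπzB : π z = pB hk := Fin.ext (by rw [pB_val]; omega)
    set x := π.symm (pA hk) with hxdef
    have hπx : π x = pA hk := π.apply_symm_apply _
    have hxz : x ≠ z := by
      intro h
      rw [← h, hπx] at hπzB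
      exact pA_ne_pB hk hπzB
    have hcx : 2 ≤ P → c x = 0 := by
      intro hP2
      by_contra hcex
      have hxS : x ∈ S := Finset.mem_filter.mpr ⟨Finset.mem_univ _, hcex, by
        rw [hπx, pA_val]; omega⟩
      have := hzmin x hxS
      rw [hπx, pA_val] at this
      omega
    rcases lt_or_gt_of_ne hxz with hlt | hlt
    · -- x < z : move the charged token left (S1)
      refine ⟨P - 1, 0, hk, Or.inr rfl, ?_⟩
      have hd := phi_move_dec_S1 π c hk x z hlt hπx hπzB hzc
      omega
    · -- z < x : discharge x as it moves right, or plain swap (S2)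
      refine ⟨P - 1, c x, hk, ?_, ?_⟩
      · rcases Nat.lt_or_ge P 2 with h2 | h2
        · left; omega
        · right; exact hcx h2
      · have hc0 : c x + dchg e (P - 1) (c x) (π x) = 0 := by
          rw [dchg_lo (c x) (by rw [hπx, pA_val])]
          ring
        have hki : (P - 1) = 0 ∨ c x = 0 := by
          rcases Nat.lt_or_ge P 2 with h2 | h2
          · left; omega
          · right; exact hcx h2
        have hd := phi_move_dec_S2 π c (c x) hk z x hlt hπzB hπx hc0 hki
        omega

end Aux

namespace Aux

variable {e n : ℕ}

lemma genD_sum {γ : Equiv.Perm (Fin n)} {d : Fin n → ZMod e} (hG : GenD e n γ d) :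
    ∑ p, d p = 0 := by
  obtain ⟨k, i, hk, -, -, rfl⟩ := hG
  exact dchg_sum hk i

lemma dchg_add_gperm {k : ℕ} (hk : k + 1 < n) (i : ZMod e) (w : Fin n) :
    dchg e k i w + dchg e k i (gperm k hk w) = 0 := by
  by_cases hp1 : (w : ℕ) = k
  · rw [dchg_lo _ hp1, gperm_lo hk hp1,
      dchg_hi (p := (⟨k + 1, hk⟩ : Fin n)) (k := k) i rfl]
    simp
  · by_cases hp2 : (w : ℕ) = k + 1
    · rw [dchg_hi _ hp2, gperm_hi hk hp2,
        dchg_lo (p := (⟨k, Nat.lt_of_succ_lt hk⟩ : Fin n)) (k := k) i rfl]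
      simp
    · rw [dchg_out _ hp1 hp2, gperm_out hk hp1 hp2, dchg_out _ hp1 hp2]
      simp

lemma move_cancel (he : 0 < e) (π : Equiv.Perm (Fin n)) (c : Fin n → ZMod e)
    {k : ℕ} (i : ZMod e) (hk : k + 1 < n) :
    mmat e (π.trans (gperm k hk)) (fun p => c p + dchg e k i (π p))
      * mmat e (gperm k hk) (dchg e k i) = mmat e π c := by
  rw [mmat_mul he]
  have h1 : (π.trans (gperm k hk)).trans (gperm k hk) = π := by
    ext p
    simp only [Equiv.trans_apply, gperm, Equiv.swap_apply_self, Equiv.Perm.coe_one, id_eq]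
  have h2 : (fun p => (c p + dchg e k i (π p)) + dchg e k i ((π.trans (gperm k hk)) p)) = c := by
    funext p
    simp only [Equiv.trans_apply]
    rw [add_assoc, dchg_add_gperm hk i (π p), add_zero]
  rw [h1, h2]

lemma prod_mmat (he : 0 < e) (hn : 2 ≤ n) (L : List (Matrix (Fin n) (Fin n) ℂ))
    (hL : ∀ x ∈ L, x ∈ genSet e n) :
    ∃ (π : Equiv.Perm (Fin n)) (c : Fin n → ZMod e),
      (∑ p, c p) = 0 ∧ L.prod = mmat e π c ∧ phi π c ≤ L.length := by
  induction L using List.reverseRecOn with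
  | nil =>
    exact ⟨1, 0, by simp, by rw [List.prod_nil, mmat_one he], by rw [phi_one_zero]; exact Nat.zero_le _⟩
  | append_singleton L' g ih =>
    obtain ⟨π, c, hsum, hprod, hphi⟩ := ih (fun x hx => hL x (by simp [hx]))
    have hg : g ∈ genSet e n := hL g (by simp)
    obtain ⟨γ, d, hG, rfl⟩ := (genSet_iff he hn g).mp hg
    refine ⟨π.trans γ, fun p => c p + d (π p), ?_, ?_, ?_⟩
    · rw [Finset.sum_add_distrib, hsum, zero_add, Equiv.sum_comp π d, genD_sum hG]
    · rw [List.prod_append, List.prod_singleton, hprod, mmat_mul he]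
    · calc phi (π.trans γ) (fun p => c p + d (π p)) ≤ phi π c + 1 := phi_move_le hG π c
        _ ≤ L'.length + 1 := by omega
        _ = (L' ++ [mmat e γ d]).length := by simp

lemma word_exists (he : 0 < e) (hn : 2 ≤ n) :
    ∀ (N : ℕ) (π : Equiv.Perm (Fin n)) (c : Fin n → ZMod e), (∑ p, c p) = 0 →
      phi π c ≤ N →
      ∃ L : List (Matrix (Fin n) (Fin n) ℂ),
        (∀ x ∈ L, x ∈ genSet e n) ∧ L.prod = mmat e π c ∧ L.length ≤ phi π c := by
  intro N
  induction N with
  | zero =>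
    intro π c hsum hphi
    by_cases h : π = 1 ∧ c = 0
    · obtain ⟨rfl, rfl⟩ := h
      exact ⟨[], by simp, by rw [List.prod_nil, mmat_one he], by simp⟩
    · obtain ⟨k, i, hk, -, hdec⟩ := exists_dec π c hsum h
      omega
  | succ N ih =>
    intro π c hsum hphi
    by_cases h : π = 1 ∧ c = 0
    · obtain ⟨rfl, rfl⟩ := h
      exact ⟨[], by simp, by rw [List.prod_nil, mmat_one he], by simp⟩
    · obtain ⟨k, i, hk, hki, hdec⟩ := exists_dec π c hsum h
      set π₂ := π.trans (gperm k hk) with hπ₂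
      set c₂ : Fin n → ZMod e := fun p => c p + dchg e k i (π p) with hc₂
      have hsum₂ : ∑ p, c₂ p = 0 := by
        rw [hc₂]
        rw [Finset.sum_add_distrib, hsum, zero_add, Equiv.sum_comp π (dchg e k i),
          dchg_sum hk i]
      obtain ⟨L', hL'mem, hL'prod, hL'len⟩ := ih π₂ c₂ hsum₂ (by omega)
      refine ⟨L' ++ [mmat e (gperm k hk) (dchg e k i)], ?_, ?_, ?_⟩
      · intro x hx
        rcases List.mem_append.mp hx with hx | hx
        · exact hL'mem x hx
        · rw [List.mem_singleton.mp hx]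
          exact (genSet_iff he hn _).mpr ⟨_, _, ⟨k, i, hk, hki, rfl, rfl⟩, rfl⟩
      · rw [List.prod_append, List.prod_singleton, hL'prod, hπ₂, hc₂,
          move_cancel he π c i hk]
      · have : (L' ++ [mmat e (gperm k hk) (dchg e k i)]).length = L'.length + 1 := by simp
        omega

lemma len_eq_phi (he : 0 < e) (hn : 2 ≤ n) (π : Equiv.Perm (Fin n)) (c : Fin n → ZMod e)
    (hsum : (∑ p, c p) = 0) : len e n (mmat e π c) = phi π c := by
  obtain ⟨L, hLmem, hLprod, hLlen⟩ := word_exists he hn (phi π c) π c hsum (le_refl _)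
  apply le_antisymm
  · exact le_trans (Nat.sInf_le ⟨L, hLmem, hLprod, rfl⟩) hLlen
  · refine le_csInf ⟨L.length, L, hLmem, hLprod, rfl⟩ ?_
    rintro b ⟨L₂, hL₂mem, hL₂prod, rfl⟩
    obtain ⟨π', c', hsum', hprod', hphi'⟩ := prod_mmat he hn L₂ hL₂mem
    rw [hprod'] at hL₂prod
    obtain ⟨hπeq, hceq⟩ := mmat_inj he hL₂prod
    rw [← hπeq, ← hceq]
    exact hphi'

end Aux

namespace Aux

variable {e : ℕ}

/-- the count of admissible charge vectors -/
lemma count_C (he : 1 < e) (m : ℕ) :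
    {c : Fin (m + 1) → ZMod e | (∑ p, c p) = 0 ∧
      ∀ v : Fin (m + 1), 1 ≤ (v : ℕ) → c v ≠ 0}.ncard = (e - 1) ^ m := by
  haveI : NeZero e := ⟨by omega⟩
  rw [← Nat.card_coe_set_eq]
  have hequiv : {c : Fin (m + 1) → ZMod e | (∑ p, c p) = 0 ∧
      ∀ v : Fin (m + 1), 1 ≤ (v : ℕ) → c v ≠ 0} ≃ (Fin m → {x : ZMod e // x ≠ 0}) := by
    refine
      { toFun := fun c k => ⟨c.1 k.succ, c.2.2 k.succ (by simp [Fin.val_succ])⟩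
        invFun := fun g =>
          ⟨Fin.cons (-∑ k, (g k : ZMod e)) (fun k => (g k : ZMod e)), ?_, ?_⟩
        left_inv := ?_
        right_inv := ?_ }
    · rw [Fin.sum_cons]
      simp
    · intro v
      induction v using Fin.cases with
      | zero => intro hv; simp at hv
      | succ k => intro _; rw [Fin.cons_succ]; exact (g k).2
    · rintro ⟨c, hc1, hc2⟩
      ext v
      simp only
      refine Fin.cases ?_ (fun k => ?_) v
      · rw [Fin.cons_zero]
        have hs := Fin.sum_univ_succ c
        rw [hc1] at hs
        exact (eq_neg_of_add_eq_zero_left hs.symm).symm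
      · rw [Fin.cons_succ]
    · intro g
      funext k
      refine Subtype.ext ?_
      show (Fin.cons (-∑ k, ((g k : ZMod e))) (fun k => (g k : ZMod e)) : Fin (m+1) → ZMod e) k.succ = (g k : ZMod e)
      rw [Fin.cons_succ]
  rw [Nat.card_congr hequiv, Nat.card_eq_fintype_card, Fintype.card_fun, Fintype.card_fin,
    Fintype.card_subtype_compl, Fintype.card_subtype_eq, ZMod.card]

end Aux

/-- The maximal length of an element of `G(e,e,n)` is
`n(n-1)`, it is attained exactly at the diagonal matrices whose diagonal
entries in positions `2,…,n` (1-based) are `e`-th roots of unity different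
from `1`, and there are `(e-1)^(n-1)` such elements. -/
theorem statement5 (e n : ℕ) (he : 1 < e) (hn : 2 ≤ n) :
    (∀ w, IsGeen e n w → len e n w ≤ n * (n - 1)) ∧
    (∀ w, IsGeen e n w →
      (len e n w = n * (n - 1) ↔
        ((∀ p q : Fin n, p ≠ q → w p q = 0) ∧
          ∀ p : Fin n, 1 ≤ (p : ℕ) → w p p ^ e = 1 ∧ w p p ≠ 1))) ∧
    {w | IsGeen e n w ∧ len e n w = n * (n - 1)}.ncard = (e - 1) ^ (n - 1) := by
  have he0 : 0 < e := by omega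
  refine ⟨?_, ?_, ?_⟩
  · -- part 1 : upper bound
    intro w hw
    obtain ⟨π, c, hsum, rfl⟩ := (Aux.isGeen_iff he0 w).mp hw
    rw [Aux.len_eq_phi he0 hn π c hsum]
    exact Aux.phi_le π c
  · -- part 2 : characterization of maximal length elements
    intro w hw
    obtain ⟨π, c, hsum, rfl⟩ := (Aux.isGeen_iff he0 w).mp hw
    rw [Aux.len_eq_phi he0 hn π c hsum, Aux.phi_eq_max_iff π c]
    constructor
    · rintro ⟨rfl, hcc⟩
      constructor
      · intro p q hpq
        simp only [Aux.mmat, Matrix.of_apply, Equiv.Perm.coe_one, id_eq]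
        exact if_neg (fun hc : q = p => hpq hc.symm)
      · intro p hp
        have hd : Aux.mmat e 1 c p p = Aux.zc e (c p) := by
          simp [Aux.mmat]
        rw [hd]
        exact ⟨Aux.zc_pow_e he0 _,
          fun hc => hcc p hp ((Aux.zc_eq_one_iff he0 _).mp hc)⟩
    · rintro ⟨hdiag, hch⟩
      have hπ1 : π = 1 := by
        ext p
        by_contra hc
        have hne : p ≠ π p := fun h => hc (Fin.ext_iff.mp h.symm)
        have h0 := hdiag p (π p) hne
        simp only [Aux.mmat, Matrix.of_apply, if_pos rfl] at h0
        exact Aux.zc_ne_zero he0 _ h0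
      subst hπ1
      refine ⟨rfl, fun v hv => ?_⟩
      have hd : Aux.mmat e 1 c v v = Aux.zc e (c v) := by
        simp [Aux.mmat]
      have := (hch v hv).2
      rw [hd] at this
      intro hc0
      rw [hc0, Aux.zc_zero] at this
      exact this rfl
  · -- part 3 : counting
    obtain ⟨m, rfl⟩ : ∃ m, n = m + 1 := ⟨n - 1, by omega⟩
    have hset : {w | IsGeen e (m + 1) w ∧ len e (m + 1) w = (m + 1) * (m + 1 - 1)}
        = (fun c => Aux.mmat e (1 : Equiv.Perm (Fin (m + 1))) c) ''
          {c : Fin (m + 1) → ZMod e | (∑ p, c p) = 0 ∧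
            ∀ v : Fin (m + 1), 1 ≤ (v : ℕ) → c v ≠ 0} := by
      ext w
      constructor
      · rintro ⟨hw, hlen⟩
        obtain ⟨π, c, hsum, rfl⟩ := (Aux.isGeen_iff he0 w).mp hw
        rw [Aux.len_eq_phi he0 hn π c hsum, Aux.phi_eq_max_iff π c] at hlen
        obtain ⟨rfl, hcc⟩ := hlen
        exact ⟨c, ⟨hsum, hcc⟩, rfl⟩
      · rintro ⟨c, ⟨hsum, hcc⟩, rfl⟩
        refine ⟨(Aux.isGeen_iff he0 _).mpr ⟨1, c, hsum, rfl⟩, ?_⟩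
        rw [Aux.len_eq_phi he0 hn 1 c hsum, Aux.phi_eq_max_iff 1 c]
        exact ⟨rfl, hcc⟩
    rw [hset, Set.ncard_image_of_injective _
      (fun c c' h => (Aux.mmat_inj he0 h).2), Aux.count_C he m]
    simp
end
end

section
/- The abelianization of the group B^{(k)}(e,e,n), defined by the presentation with generators t̃_0,...,t̃_{e−1}, s̃_3,...,s̃_n and relations s̃_i s̃_j s̃_i = s̃_j s̃_i s̃_j (|i−j|=1), s̃_i s̃_j = s̃_j s̃_i (|i−j|>1), s̃_3 t̃_i s̃_3 = t̃_i s̃_3 t̃_i, s̃_j t̃_i = t̃_i s̃_j (j ≥ 4), and t̃_i t̃_{i−k} = t̃_j t̃_{j−k}, is infinite cyclic (isomorphic to ℤ). -/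
noncomputable section

/-- Index type for the generators `t̃_0,…,t̃_{e-1}` (left) and
`s̃_3,…,s̃_n` (right, `p : Fin (n-2)` corresponds to `s̃_{p+3}`). -/
abbrev BkGen (e n : ℕ) := ZMod e ⊕ Fin (n - 2)

open FreeGroup in
/-- The relators (words `lhs * rhs⁻¹`) of the presentation of the group
`B^{(k)}(e,e,n)`. -/
inductive BkGrpRel (e n k : ℕ) : FreeGroup (BkGen e n) → Prop
  | braidS (p q : Fin (n - 2)) (h : (p : ℕ) + 1 = (q : ℕ) ∨ (q : ℕ) + 1 = (p : ℕ)) :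
      BkGrpRel e n k ((of (Sum.inr p) * of (Sum.inr q) * of (Sum.inr p)) *
        (of (Sum.inr q) * of (Sum.inr p) * of (Sum.inr q))⁻¹)
  | commS (p q : Fin (n - 2)) (h : (p : ℕ) + 1 < (q : ℕ) ∨ (q : ℕ) + 1 < (p : ℕ)) :
      BkGrpRel e n k ((of (Sum.inr p) * of (Sum.inr q)) *
        (of (Sum.inr q) * of (Sum.inr p))⁻¹)
  | braidTS (i : ZMod e) (p : Fin (n - 2)) (hp : (p : ℕ) = 0) :
      BkGrpRel e n k ((of (Sum.inr p) * of (Sum.inl i) * of (Sum.inr p)) *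
        (of (Sum.inl i) * of (Sum.inr p) * of (Sum.inl i))⁻¹)
  | commTS (i : ZMod e) (p : Fin (n - 2)) (hp : 1 ≤ (p : ℕ)) :
      BkGrpRel e n k ((of (Sum.inr p) * of (Sum.inl i)) *
        (of (Sum.inl i) * of (Sum.inr p))⁻¹)
  | relT (i j : ZMod e) :
      BkGrpRel e n k ((of (Sum.inl i) * of (Sum.inl (i - (k : ZMod e)))) *
        (of (Sum.inl j) * of (Sum.inl (j - (k : ZMod e))))⁻¹)

/-- The group `B^{(k)}(e,e,n)` defined by the stated presentation. -/
abbrev BkGroup (e n k : ℕ) := PresentedGroup {x | BkGrpRel e n k x}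

/-- The abelianization of `B^{(k)}(e,e,n)` is infinite
cyclic, i.e. isomorphic to `ℤ`. -/
theorem statement15 (e n k : ℕ) (he : 2 ≤ e) (hn : 3 ≤ n)
    (hk1 : 1 ≤ k) (hk : k ≤ e - 1) :
    Nonempty (Abelianization (BkGroup e n k) ≃* Multiplicative ℤ) := by
  -- the map to ℤ sending every generator to 1
  set f : BkGen e n → Multiplicative ℤ := fun _ => Multiplicative.ofAdd 1 with hf
  have hrels : ∀ r ∈ {x | BkGrpRel e n k x}, FreeGroup.lift f r = 1 := by
    intro r hr
    cases hr <;>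
      simp only [map_mul, map_inv, FreeGroup.lift_apply_of, hf] <;> group
  set φ : BkGroup e n k →* Multiplicative ℤ := PresentedGroup.toGroup hrels with hφ
  set φ' : Abelianization (BkGroup e n k) →* Multiplicative ℤ := Abelianization.lift φ with hφ'
  -- F : FreeGroup → Abelianization
  set F : FreeGroup (BkGen e n) →* Abelianization (BkGroup e n k) :=
    Abelianization.of.comp (PresentedGroup.mk _) with hF
  have hn2 : 0 < n - 2 := by omega
  set p0 : Fin (n - 2) := ⟨0, hn2⟩ with hp0
  set g0 : Abelianization (BkGroup e n k) := F (FreeGroup.of (Sum.inl 0)) with hg0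
  -- relators die in the abelianization
  have hFrel : ∀ r, BkGrpRel e n k r → F r = 1 := by
    intro r hr
    have : (PresentedGroup.mk {x | BkGrpRel e n k x} r) = 1 := by
      refine (QuotientGroup.eq_one_iff _).mpr ?_
      exact Subgroup.subset_normalClosure hr
    simp [hF, MonoidHom.comp_apply, this]
  -- from the braid relation a b a = b a b we get a = b in the abelianization
  have cancel : ∀ a b : Abelianization (BkGroup e n k),
      a * b * a * (b * a * b)⁻¹ = 1 → a = b := by
    intro a b h
    have h1 : a * b * a = b * a * b := by
      rwa [mul_inv_eq_one] at h
    have h2 : a * (a * b) = b * (a * b) := by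
      calc a * (a * b) = a * b * a := by rw [mul_comm a b, ← mul_assoc, mul_comm a b]
        _ = b * a * b := h1
        _ = b * (a * b) := by rw [mul_assoc]
    exact mul_right_cancel h2
  have key_t : ∀ i : ZMod e,
      F (FreeGroup.of (Sum.inl i)) = F (FreeGroup.of (Sum.inr p0)) := by
    intro i
    have := hFrel _ (BkGrpRel.braidTS i p0 rfl)
    simp only [map_mul, map_inv] at this
    exact (cancel _ _ this).symm
  have key_s : ∀ m : ℕ, ∀ h : m < n - 2,
      F (FreeGroup.of (Sum.inr ⟨m, h⟩)) = F (FreeGroup.of (Sum.inr p0)) := by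
    intro m
    induction m with
    | zero => intro h; rfl
    | succ m ih =>
      intro h
      have hm : m < n - 2 := Nat.lt_of_succ_lt h
      have := hFrel _ (BkGrpRel.braidS ⟨m, hm⟩ ⟨m + 1, h⟩ (Or.inl rfl))
      simp only [map_mul, map_inv] at this
      rw [← cancel _ _ this]
      exact ih hm
  have key : ∀ x : BkGen e n, F (FreeGroup.of x) = g0 := by
    intro x
    cases x with
    | inl i => rw [key_t i, hg0, key_t 0]
    | inr p =>
      rw [hg0, key_t 0]
      exact key_s p.val p.isLt
  set ψ : Multiplicative ℤ →* Abelianization (BkGroup e n k) :=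
    zpowersHom _ g0 with hψ
  have hφ'g0 : φ' g0 = Multiplicative.ofAdd 1 := by
    simp [hg0, hF, hφ', hφ, MonoidHom.comp_apply]
    rfl
  have h1 : φ'.comp ψ = MonoidHom.id _ := by
    ext x
    simp [hψ, map_zpow, hφ'g0]
  have h2 : ψ.comp φ' = MonoidHom.id _ := by
    refine Abelianization.hom_ext _ _ ?_
    refine PresentedGroup.ext fun x => ?_
    have h3 : φ (PresentedGroup.of x) = Multiplicative.ofAdd 1 := PresentedGroup.toGroup.of hrels
    simp only [MonoidHom.comp_apply, MonoidHom.id_apply, Abelianization.lift_apply_of, hφ', h3, hψ,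
      zpowersHom_apply]
    have : Abelianization.of (PresentedGroup.of x : BkGroup e n k) = g0 := key x
    simpa using this.symm
  exact ⟨MonoidHom.toMulEquiv φ' ψ h2 h1⟩
end
end

section
/- In the Hecke algebra H(e,e,n) over R_0 = ℤ[a], for all i, j ∈ ℤ/eℤ with i ≠ j, the product t_j t_i satisfies the recursion t_j t_i = t_{j−1} t_{i−1} + a(t_i − t_{j−1}); consequently t_j t_i lies in the R_0-span of {1, t_0, ..., t_{e−1}, t_1 t_0, t_2 t_0, ..., t_{e−1} t_0}. -/
noncomputable section

/-- The base ring `R₀ = ℤ[a]`, with `a = Polynomial.X`. -/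
abbrev R0 := Polynomial ℤ

/-- Index type for the generators `t_0,…,t_{e-1}` (left) and
`s_3,…,s_n` (right, `p : Fin (n-2)` corresponds to `s_{p+3}`). -/
abbrev HGen (e n : ℕ) := ZMod e ⊕ Fin (n - 2)

open FreeAlgebra in
/-- The defining relations of the Hecke algebra `H(e,e,n)`:
the braid relations of the Corran–Picantin presentation together with the
quadratic relations `t_i² = a t_i + 1`, `s_j² = a s_j + 1`. -/
inductive HeckeRel (e n : ℕ) :
    FreeAlgebra R0 (HGen e n) → FreeAlgebra R0 (HGen e n) → Prop
  | relT (i j : ZMod e) :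
      HeckeRel e n (ι R0 (Sum.inl i) * ι R0 (Sum.inl (i - 1)))
        (ι R0 (Sum.inl j) * ι R0 (Sum.inl (j - 1)))
  | braidTS (i : ZMod e) (p : Fin (n - 2)) (hp : (p : ℕ) = 0) :
      HeckeRel e n (ι R0 (Sum.inl i) * ι R0 (Sum.inr p) * ι R0 (Sum.inl i))
        (ι R0 (Sum.inr p) * ι R0 (Sum.inl i) * ι R0 (Sum.inr p))
  | commTS (i : ZMod e) (p : Fin (n - 2)) (hp : 1 ≤ (p : ℕ)) :
      HeckeRel e n (ι R0 (Sum.inr p) * ι R0 (Sum.inl i))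
        (ι R0 (Sum.inl i) * ι R0 (Sum.inr p))
  | braidS (p q : Fin (n - 2)) (h : (p : ℕ) + 1 = (q : ℕ)) :
      HeckeRel e n (ι R0 (Sum.inr p) * ι R0 (Sum.inr q) * ι R0 (Sum.inr p))
        (ι R0 (Sum.inr q) * ι R0 (Sum.inr p) * ι R0 (Sum.inr q))
  | commS (p q : Fin (n - 2)) (h : (p : ℕ) + 1 < (q : ℕ) ∨ (q : ℕ) + 1 < (p : ℕ)) :
      HeckeRel e n (ι R0 (Sum.inr p) * ι R0 (Sum.inr q))
        (ι R0 (Sum.inr q) * ι R0 (Sum.inr p))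
  | quadT (i : ZMod e) :
      HeckeRel e n (ι R0 (Sum.inl i) * ι R0 (Sum.inl i))
        ((Polynomial.X : R0) • ι R0 (Sum.inl i) + 1)
  | quadS (p : Fin (n - 2)) :
      HeckeRel e n (ι R0 (Sum.inr p) * ι R0 (Sum.inr p))
        ((Polynomial.X : R0) • ι R0 (Sum.inr p) + 1)

/-- The Hecke algebra `H(e,e,n)` over `ℤ[a]`. -/
abbrev Hecke (e n : ℕ) := RingQuot (HeckeRel e n)

/-- The generator `t_i` of `H(e,e,n)`. -/
def Tgen (e n : ℕ) (i : ZMod e) : Hecke e n :=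
  RingQuot.mkAlgHom R0 (HeckeRel e n) (FreeAlgebra.ι R0 (Sum.inl i))

section Aux

variable (e n : ℕ)

local notation "t" => Tgen e n

lemma hecke_relT (i j : ZMod e) :
    Tgen e n i * Tgen e n (i - 1) = Tgen e n j * Tgen e n (j - 1) := by
  have := RingQuot.mkAlgHom_rel R0 (HeckeRel.relT (e := e) (n := n) i j)
  simpa [Tgen, map_mul] using this

lemma hecke_quadT (i : ZMod e) :
    Tgen e n i * Tgen e n i =
      algebraMap R0 (Hecke e n) Polynomial.X * Tgen e n i + 1 := by
  have := RingQuot.mkAlgHom_rel R0 (HeckeRel.quadT (e := e) (n := n) i)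
  simpa [Tgen, map_mul, map_add, map_smul, Algebra.smul_def] using this

lemma hecke_inv (i : ZMod e) :
    Tgen e n i * (Tgen e n i - algebraMap R0 (Hecke e n) Polynomial.X) = 1 := by
  rw [mul_sub (α := Hecke e n), hecke_quadT, ← Algebra.commutes (A := Hecke e n)]
  exact add_sub_cancel_left (algebraMap R0 (Hecke e n) Polynomial.X * Tgen e n i) (1 : Hecke e n)

lemma hecke_rec (i j : ZMod e) :
    Tgen e n j * Tgen e n i =
      Tgen e n (j - 1) * Tgen e n (i - 1) +
        algebraMap R0 (Hecke e n) Polynomial.X *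
          (Tgen e n i - Tgen e n (j - 1)) := by
  set c : Hecke e n := algebraMap R0 (Hecke e n) Polynomial.X with hc
  have h1 : t i = (t i * t (i - 1)) * (t (i - 1) - c) := by
    rw [mul_assoc, hecke_inv, mul_one]
  calc t j * t i = t j * ((t j * t (j - 1)) * (t (i - 1) - c)) := by
        rw [← hecke_relT e n i j, ← h1]
    _ = (t j * t j) * (t (j - 1) * (t (i - 1) - c)) := by
        simp only [mul_assoc]
    _ = (c * t j + 1) * (t (j - 1) * (t (i - 1) - c)) := by
        rw [hecke_quadT]
    _ = c * ((t j * t (j - 1)) * (t (i - 1) - c)) + t (j - 1) * (t (i - 1) - c) := by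
        rw [add_mul (c * t j) (1 : Hecke e n) (t (j - 1) * (t (i - 1) - c)), one_mul]
        simp only [mul_assoc]
    _ = c * ((t i * t (i - 1)) * (t (i - 1) - c)) + t (j - 1) * (t (i - 1) - c) := by
        rw [hecke_relT e n j i]
    _ = c * t i + (t (j - 1) * t (i - 1) - t (j - 1) * c) := by
        rw [← h1, mul_sub (α := Hecke e n)]
    _ = t (j - 1) * t (i - 1) + c * (t i - t (j - 1)) := by
        rw [← Algebra.commutes (A := Hecke e n), mul_sub (α := Hecke e n)]
        abel

lemma hecke_mem_span (S : Submodule R0 (Hecke e n))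
    (hT : ∀ m : ZMod e, Tgen e n m ∈ S) (j : ZMod e) (hj : Tgen e n j * Tgen e n 0 ∈ S) :
    ∀ k : ℕ, Tgen e n (j + k) * Tgen e n (k : ZMod e) ∈ S := by
  intro k
  induction k with
  | zero => simpa using hj
  | succ k ih =>
      have hrec := hecke_rec e n ((k : ZMod e) + 1) (j + k + 1)
      have e1 : j + k + 1 - 1 = j + k := by ring
      have e2 : (k : ZMod e) + 1 - 1 = (k : ZMod e) := by ring
      rw [e1, e2] at hrec
      have : Tgen e n (j + (k + 1 : ℕ)) * Tgen e n ((k + 1 : ℕ) : ZMod e) =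
          Tgen e n (j + k) * Tgen e n (k : ZMod e) +
            (Polynomial.X : R0) • (Tgen e n ((k : ZMod e) + 1) - Tgen e n (j + k)) := by
        push_cast
        rw [← add_assoc, hrec, Algebra.smul_def]
      rw [this]
      have hsub : Tgen e n ((k : ZMod e) + 1) - Tgen e n (j + k) ∈ S := by
        have h1 := S.add_mem (hT ((k : ZMod e) + 1))
          (S.smul_mem (-1 : R0) (hT (j + k)))
        have h2 : Tgen e n ((k : ZMod e) + 1) - Tgen e n (j + k) =
            Tgen e n ((k : ZMod e) + 1) + (-1 : R0) • Tgen e n (j + k) :=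
          (sub_eq_add_neg _ _).trans
            (congrArg (Tgen e n ((k : ZMod e) + 1) + ·)
              (neg_one_smul R0 (Tgen e n (j + k))).symm)
        rw [h2]; exact h1
      exact S.add_mem ih (S.smul_mem _ hsub)

end Aux

/-- In `H(e,e,n)`, for `i ≠ j` in `ℤ/eℤ`:
`t_j t_i = t_{j-1} t_{i-1} + a (t_i − t_{j-1})`, and consequently `t_j t_i`
lies in the `ℤ[a]`-span of `{1, t_0, …, t_{e-1}} ∪ {t_m t_0 : m ≠ 0}`. -/
theorem statement16 (e n : ℕ) (he : 1 ≤ e) (hn : 2 ≤ n)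
    (i j : ZMod e) (hij : i ≠ j) :
    Tgen e n j * Tgen e n i =
      Tgen e n (j - 1) * Tgen e n (i - 1) +
        (Polynomial.X : R0) • (Tgen e n i - Tgen e n (j - 1)) ∧
    Tgen e n j * Tgen e n i ∈ Submodule.span R0
      (({1} ∪ Set.range (Tgen e n)) ∪
        ((fun m : ZMod e => Tgen e n m * Tgen e n 0) '' {m | m ≠ 0})) := by
  haveI : NeZero e := ⟨by omega⟩
  constructor
  · rw [Algebra.smul_def]
    exact hecke_rec e n i j
  · set S := Submodule.span R0
      (({1} ∪ Set.range (Tgen e n)) ∪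
        ((fun m : ZMod e => Tgen e n m * Tgen e n 0) '' {m | m ≠ 0})) with hS
    have hT : ∀ m : ZMod e, Tgen e n m ∈ S := fun m =>
      Submodule.subset_span (Or.inl (Or.inr ⟨m, rfl⟩))
    have hj0 : Tgen e n (j - i) * Tgen e n 0 ∈ S :=
      Submodule.subset_span (Or.inr ⟨j - i, sub_ne_zero.mpr hij.symm, rfl⟩)
    have key := hecke_mem_span e n S hT (j - i) hj0 i.val
    have hcast : ((i.val : ℕ) : ZMod e) = i := by
      rw [ZMod.natCast_val, ZMod.cast_id]
    have h1 : j - i + ((i.val : ℕ) : ZMod e) = j := by rw [hcast]; ring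
    rw [h1, hcast] at key
    exact key
end
end

section
/- In the Hecke algebra H(e,e,n) over ℤ[a], for every 1 ≤ k ≤ e−1, the element t_k t_0 lies in the ℤ[a]-submodule spanned by (t_1 t_0), (t_1 t_0)^2, ..., (t_1 t_0)^k, t_1, t_2, ..., t_{k−1}. -/
noncomputable section

lemma rel_tt (e n : ℕ) (i j : ZMod e) :
    Tgen e n i * Tgen e n (i - 1) = Tgen e n j * Tgen e n (j - 1) := by
  have := RingQuot.mkAlgHom_rel R0 (HeckeRel.relT (e := e) (n := n) i j)
  simpa [Tgen, map_mul] using this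

lemma quad_t (e n : ℕ) (i : ZMod e) :
    Tgen e n i * Tgen e n i = (Polynomial.X : R0) • Tgen e n i + 1 := by
  have := RingQuot.mkAlgHom_rel R0 (HeckeRel.quadT (e := e) (n := n) i)
  simpa [Tgen, map_mul, map_add, map_one, map_smul] using this

lemma u_mul_t (e n : ℕ) (j : ZMod e) :
    (Tgen e n 1 * Tgen e n 0) * Tgen e n j
      = (Polynomial.X : R0) • (Tgen e n 1 * Tgen e n 0) + Tgen e n (j + 1) := by
  have h1 : Tgen e n 1 * Tgen e n 0 = Tgen e n (j + 1) * Tgen e n j := by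
    simpa using rel_tt e n 1 (j + 1)
  rw [h1, mul_assoc, quad_t, mul_add, mul_one, mul_smul_comm, ← h1]

lemma rec_t (e n : ℕ) (i : ZMod e) :
    (Tgen e n 1 * Tgen e n 0) * (Tgen e n i * Tgen e n 0)
      = Tgen e n (i + 1) * Tgen e n 0
        + (Polynomial.X ^ 2 : R0) • (Tgen e n 1 * Tgen e n 0)
        + (Polynomial.X : R0) • Tgen e n 1 := by
  have h1 : Tgen e n 1 * Tgen e n 0 = Tgen e n (i + 1) * Tgen e n i := by
    simpa using rel_tt e n 1 (i + 1)
  have h3 : (Tgen e n 1 * Tgen e n 0) * (Tgen e n i * Tgen e n 0)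
      = (Polynomial.X : R0) • ((Tgen e n 1 * Tgen e n 0) * Tgen e n 0)
        + Tgen e n (i + 1) * Tgen e n 0 := by
    rw [h1, show Tgen e n (i+1) * Tgen e n i * (Tgen e n i * Tgen e n 0)
        = Tgen e n (i+1) * (Tgen e n i * Tgen e n i) * Tgen e n 0 by noncomm_ring,
      quad_t, mul_add, mul_one, add_mul, mul_smul_comm, smul_mul_assoc, ← h1]
  rw [h3, u_mul_t e n 0, zero_add, smul_add, smul_smul, ← pow_two]
  abel

/-- In `H(e,e,n)`, for `1 ≤ k ≤ e-1`, the element `t_k t_0`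
lies in the `ℤ[a]`-span of `(t_1 t_0), (t_1 t_0)², …, (t_1 t_0)^k` together
with `t_1, t_2, …, t_{k-1}`. -/
theorem statement17 (e n : ℕ) (he : 1 ≤ e) (hn : 2 ≤ n)
    (k : ℕ) (hk1 : 1 ≤ k) (hk : k ≤ e - 1) :
    Tgen e n (k : ZMod e) * Tgen e n 0 ∈ Submodule.span R0
      (((fun m : ℕ => (Tgen e n 1 * Tgen e n 0) ^ m) '' {m | 1 ≤ m ∧ m ≤ k}) ∪
        ((fun m : ℕ => Tgen e n (m : ZMod e)) '' {m | 1 ≤ m ∧ m ≤ k - 1})) := by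
  clear hk
  induction k, hk1 using Nat.le_induction with
  | base =>
    refine Submodule.subset_span (Or.inl ⟨1, ⟨le_rfl, le_rfl⟩, ?_⟩)
    simp
  | succ k hk ih =>
    set u := Tgen e n 1 * Tgen e n 0 with hu
    set S : Set (Hecke e n) :=
      ((fun m : ℕ => u ^ m) '' {m | 1 ≤ m ∧ m ≤ k + 1}) ∪
        ((fun m : ℕ => Tgen e n (m : ZMod e)) '' {m | 1 ≤ m ∧ m ≤ k + 1 - 1}) with hS
    have hu_mem : u ∈ Submodule.span R0 S :=
      Submodule.subset_span (Or.inl ⟨1, ⟨le_rfl, by omega⟩, by simp⟩)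
    have ht1_mem : Tgen e n 1 ∈ Submodule.span R0 S := by
      refine Submodule.subset_span (Or.inr ⟨1, ⟨le_rfl, by omega⟩, ?_⟩)
      simp
    have hmain : u * (Tgen e n (k : ZMod e) * Tgen e n 0) ∈ Submodule.span R0 S := by
      refine Submodule.span_induction ?_ ?_ ?_ ?_ ih
      · rintro x (⟨m, ⟨hm1, hm2⟩, rfl⟩ | ⟨j, ⟨hj1, hj2⟩, rfl⟩)
        · refine Submodule.subset_span (Or.inl ⟨m + 1, ⟨by omega, by omega⟩, ?_⟩)
          simp [pow_succ']
        · rw [u_mul_t]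
          refine Submodule.add_mem _ (Submodule.smul_mem _ _ hu_mem) ?_
          refine Submodule.subset_span (Or.inr ⟨j + 1, ⟨by omega, by omega⟩, ?_⟩)
          push_cast
          rfl
      · simp
      · intro x y _ _ hx hy
        rw [mul_add]; exact Submodule.add_mem _ hx hy
      · intro c x _ hx
        rw [mul_smul_comm]; exact Submodule.smul_mem _ _ hx
    have cancel : ∀ (c : R0) (x : Hecke e n), c • x + (-c) • x = 0 := fun c x => by
      rw [← add_smul, add_neg_cancel, zero_smul]
    have key : u * (Tgen e n (k : ZMod e) * Tgen e n 0)
          + (-(Polynomial.X ^ 2) : R0) • u + (-Polynomial.X : R0) • Tgen e n 1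
        = Tgen e n ((k : ZMod e) + 1) * Tgen e n 0 := by
      rw [rec_t]
      calc Tgen e n ((k : ZMod e) + 1) * Tgen e n 0 + (Polynomial.X ^ 2 : R0) • u
            + (Polynomial.X : R0) • Tgen e n 1
            + (-(Polynomial.X ^ 2) : R0) • u + (-Polynomial.X : R0) • Tgen e n 1
          = Tgen e n ((k : ZMod e) + 1) * Tgen e n 0
            + ((Polynomial.X ^ 2 : R0) • u + (-(Polynomial.X ^ 2) : R0) • u)
            + ((Polynomial.X : R0) • Tgen e n 1
              + (-Polynomial.X : R0) • Tgen e n 1) := by abel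
        _ = Tgen e n ((k : ZMod e) + 1) * Tgen e n 0 := by
            rw [cancel, cancel, add_zero, add_zero]
    have hcast : ((k + 1 : ℕ) : ZMod e) = (k : ZMod e) + 1 := by push_cast; ring
    rw [hcast, ← key]
    exact Submodule.add_mem _ (Submodule.add_mem _ hmain (Submodule.smul_mem _ _ hu_mem))
      (Submodule.smul_mem _ _ ht1_mem)
end
end

section
/- In the Hecke algebra H(d,1,n) over R_0 = ℤ[a, b_1, ..., b_{d−1}], for every 1 ≤ k ≤ d−1 the element (s_2 z s_2)^k s_2 lies in the R_0-span of (s_2 z s_2)^k, z(s_2 z s_2)^{k−1}, ..., z^{k−1}(s_2 z s_2), and s_2 z^k. -/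
noncomputable section

/-- The base ring `R₀ = ℤ[a, b_1, …, b_{d-1}]`, realized as multivariate
polynomials over `ℤ` in variables indexed by `Fin d`, with `a` the variable
of index `0` and `b_m` the variable of index `m` for `1 ≤ m ≤ d-1`. -/
abbrev Rd (d : ℕ) := MvPolynomial (Fin d) ℤ

/-- The parameter `a`. -/
def Avar (d : ℕ) : Rd d := if h : 0 < d then MvPolynomial.X ⟨0, h⟩ else 0

/-- The parameter `b_m` (for `1 ≤ m ≤ d-1`). -/
def Bvar (d m : ℕ) : Rd d := if h : m < d then MvPolynomial.X ⟨m, h⟩ else 0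

/-- Index type for the generators: `z` (left) and `s_2,…,s_n`
(right, `p : Fin (n-1)` corresponds to `s_{p+2}`). -/
abbrev HdGen (n : ℕ) := Unit ⊕ Fin (n - 1)

open FreeAlgebra in
/-- The defining relations of the Hecke algebra `H(d,1,n)`. -/
inductive HdRel (d n : ℕ) :
    FreeAlgebra (Rd d) (HdGen n) → FreeAlgebra (Rd d) (HdGen n) → Prop
  | zs2 (p : Fin (n - 1)) (hp : (p : ℕ) = 0) :
      HdRel d n
        (ι (Rd d) (Sum.inl ()) * ι (Rd d) (Sum.inr p) * ι (Rd d) (Sum.inl ()) *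
          ι (Rd d) (Sum.inr p))
        (ι (Rd d) (Sum.inr p) * ι (Rd d) (Sum.inl ()) * ι (Rd d) (Sum.inr p) *
          ι (Rd d) (Sum.inl ()))
  | zsj (p : Fin (n - 1)) (hp : 1 ≤ (p : ℕ)) :
      HdRel d n (ι (Rd d) (Sum.inl ()) * ι (Rd d) (Sum.inr p))
        (ι (Rd d) (Sum.inr p) * ι (Rd d) (Sum.inl ()))
  | braidS (p q : Fin (n - 1)) (h : (p : ℕ) + 1 = (q : ℕ)) :
      HdRel d n
        (ι (Rd d) (Sum.inr p) * ι (Rd d) (Sum.inr q) * ι (Rd d) (Sum.inr p))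
        (ι (Rd d) (Sum.inr q) * ι (Rd d) (Sum.inr p) * ι (Rd d) (Sum.inr q))
  | commS (p q : Fin (n - 1)) (h : (p : ℕ) + 1 < (q : ℕ) ∨ (q : ℕ) + 1 < (p : ℕ)) :
      HdRel d n (ι (Rd d) (Sum.inr p) * ι (Rd d) (Sum.inr q))
        (ι (Rd d) (Sum.inr q) * ι (Rd d) (Sum.inr p))
  | quadZ :
      HdRel d n (ι (Rd d) (Sum.inl ()) ^ d)
        ((∑ m ∈ Finset.Ico 1 d, Bvar d m • ι (Rd d) (Sum.inl ()) ^ (d - m)) + 1)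
  | quadS (p : Fin (n - 1)) :
      HdRel d n (ι (Rd d) (Sum.inr p) * ι (Rd d) (Sum.inr p))
        (Avar d • ι (Rd d) (Sum.inr p) + 1)

/-- The Hecke algebra `H(d,1,n)`. -/
abbrev Hd (d n : ℕ) := RingQuot (HdRel d n)

/-- The generator `z` of `H(d,1,n)`. -/
def Zel (d n : ℕ) : Hd d n :=
  RingQuot.mkAlgHom (Rd d) (HdRel d n) (FreeAlgebra.ι (Rd d) (Sum.inl ()))

/-- The generator `s_{p+2}` of `H(d,1,n)`. -/
def Sel (d n : ℕ) (p : Fin (n - 1)) : Hd d n :=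
  RingQuot.mkAlgHom (Rd d) (HdRel d n) (FreeAlgebra.ι (Rd d) (Sum.inr p))

/-- In `H(d,1,n)`, for `1 ≤ k ≤ d-1`, the element
`(s_2 z s_2)^k s_2` lies in the `R₀`-span of
`{z^m (s_2 z s_2)^{k-m} : 0 ≤ m ≤ k-1} ∪ {s_2 z^k}` (here `s_2 = Sel d n p0`
with `p0` the index of `s_2`). -/
theorem statement18 (d n : ℕ) (hd : 1 < d) (hn : 2 ≤ n)
    (k : ℕ) (hk1 : 1 ≤ k) (hk : k ≤ d - 1)
    (p0 : Fin (n - 1)) (hp0 : (p0 : ℕ) = 0) :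
    (Sel d n p0 * Zel d n * Sel d n p0) ^ k * Sel d n p0 ∈ Submodule.span (Rd d)
      (((fun m : ℕ => Zel d n ^ m * (Sel d n p0 * Zel d n * Sel d n p0) ^ (k - m)) ''
          {m | m ≤ k - 1}) ∪
        {Sel d n p0 * Zel d n ^ k}) := by

  set z := Zel d n with hz
  set s := Sel d n p0 with hs
  set w := s * z * s with hw
  -- s * s = a • s + 1
  have hss : s * s = Avar d • s + 1 := by
    have h := RingQuot.mkAlgHom_rel (Rd d) (HdRel.quadS (d := d) (n := n) p0)
    simpa [hs, Sel, map_mul, map_add, map_smul, map_one] using h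
  -- z commutes with w = s z s
  have hcomm : Commute z w := by
    have h := RingQuot.mkAlgHom_rel (Rd d) (HdRel.zs2 (d := d) (n := n) p0 hp0)
    simp only [map_mul] at h
    show z * w = w * z
    rw [hw, hz, hs, Zel, Sel]
    calc RingQuot.mkAlgHom (Rd d) (HdRel d n) (FreeAlgebra.ι (Rd d) (Sum.inl ())) *
          (RingQuot.mkAlgHom (Rd d) (HdRel d n) (FreeAlgebra.ι (Rd d) (Sum.inr p0)) *
            RingQuot.mkAlgHom (Rd d) (HdRel d n) (FreeAlgebra.ι (Rd d) (Sum.inl ())) *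
            RingQuot.mkAlgHom (Rd d) (HdRel d n) (FreeAlgebra.ι (Rd d) (Sum.inr p0)))
        = _ := by rw [← mul_assoc, ← mul_assoc]
      _ = _ := h
      _ = _ := by rw [mul_assoc, mul_assoc]
  have hws : w * s = Avar d • w + s * z := by
    calc w * s = s * z * (s * s) := by rw [hw, mul_assoc]
      _ = s * z * (Avar d • s + 1) := by rw [hss]
      _ = Avar d • (s * z * s) + s * z := by
          rw [mul_add, mul_smul_comm, mul_one]
      _ = Avar d • w + s * z := by rw [hw]
  -- key identity
  have key : ∀ j, 1 ≤ j →
      w ^ j * s = Avar d • (∑ m ∈ Finset.range j, z ^ m * w ^ (j - m)) + s * z ^ j := by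
    intro j hj
    induction j, hj using Nat.le_induction with
    | base => simpa using hws
    | succ j hj ih =>
      have hwzm : ∀ m : ℕ, w * z ^ m = z ^ m * w := fun m =>
        ((hcomm.symm).pow_right m).eq
      calc w ^ (j + 1) * s = w * (w ^ j * s) := by
            rw [pow_succ', mul_assoc]
        _ = w * (Avar d • (∑ m ∈ Finset.range j, z ^ m * w ^ (j - m)) + s * z ^ j) := by
            rw [ih]
        _ = Avar d • (∑ m ∈ Finset.range j, w * (z ^ m * w ^ (j - m)))
              + (w * s) * z ^ j := by
            rw [mul_add, mul_smul_comm, Finset.mul_sum, ← mul_assoc w s (z ^ j)]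
        _ = Avar d • (∑ m ∈ Finset.range j, z ^ m * w ^ (j + 1 - m))
              + (Avar d • (z ^ j * w ^ (j + 1 - j)) + s * z ^ (j + 1)) := by
            rw [hws]
            congr 1
            · congr 1
              refine Finset.sum_congr rfl fun m hm => ?_
              have hmj : m ≤ j := le_of_lt (Finset.mem_range.mp hm)
              rw [← mul_assoc, hwzm, mul_assoc, ← pow_succ']
              rw [Nat.succ_sub hmj]
            · rw [add_mul, smul_mul_assoc, hwzm, Nat.add_sub_cancel_left, pow_one,
                mul_assoc, ← pow_succ']
        _ = Avar d • (∑ m ∈ Finset.range (j + 1), z ^ m * w ^ (j + 1 - m))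
              + s * z ^ (j + 1) := by
            rw [Finset.sum_range_succ, smul_add, add_assoc]
  rw [key k hk1]
  refine Submodule.add_mem _ (Submodule.smul_mem _ _ (Submodule.sum_mem _ fun m hm => ?_))
    (Submodule.subset_span (Or.inr rfl))
  refine Submodule.subset_span (Or.inl ⟨m, ?_, rfl⟩)
  have : m < k := Finset.mem_range.mp hm
  exact Nat.le_sub_one_of_lt this
end
end
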